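/- arXiv:1804.01499 — 8 statements merged into one kernel-verified Lean document; each statement's English description precedes it below -/
import Mathlib

section
/- Let X, Y be compact Hausdorff spaces, E, F Banach spaces over 𝕂 ∈ {ℝ, ℂ}, A a closed 𝕂-linear subspace of C(X,E), B a 𝕂-linear subspace of C(Y,F), and T : A → B a surjective real-linear isometry. If x, x' ∈ Θ(A) are distinct points, then H_x ∩ H_{x'} = ∅. -/
open Set Metric

variable {𝕂 : Type*} [RCLike 𝕂]
variable {X : Type*} [TopologicalSpace X] [CompactSpace X] [T2Space X]
variable {Y : Type*} [TopologicalSpace Y] [CompactSpace Y] [T2Space Y]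
variable {E : Type*} [NormedAddCommGroup E] [NormedSpace ℝ E] [NormedSpace 𝕂 E]
  [IsScalarTower ℝ 𝕂 E] [CompleteSpace E]
variable {F : Type*} [NormedAddCommGroup F] [NormedSpace ℝ F] [NormedSpace 𝕂 F]
  [IsScalarTower ℝ 𝕂 F] [CompleteSpace F]

/-- The set `V^A_{x,K} = {f ∈ S(A) : f(x) ∈ K}`. -/
def Vset {Z M : Type*} [TopologicalSpace Z] [CompactSpace Z]
    [NormedAddCommGroup M] [NormedSpace 𝕂 M]
    (A : Subspace 𝕂 C(Z, M)) (x : Z) (K : Set M) : Set C(Z, M) :=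
  {f | f ∈ A ∧ ‖f‖ = 1 ∧ f x ∈ K}

/-- The set `Θ(A)` of strong boundary points of a set `A` of functions in `C(X,E)`. -/
def strongBoundaryPoints {Z M : Type*} [TopologicalSpace Z] [CompactSpace Z]
    [NormedAddCommGroup M] (A : Set C(Z, M)) : Set Z :=
  {x | ∀ U ∈ nhds x, ∀ ε : ℝ, 0 < ε → ∀ u : M, ‖u‖ = 1 →
    ∃ f ∈ A, ‖f‖ = 1 ∧ f x = u ∧ ∀ y, y ∉ U → ‖f y‖ < ε}

/-- `H_x`: the set of points `y ∈ Y` such that `T(V^A_{x,{u}}) ⊆ V^B_{y,{v}}`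
for some unit vectors `u ∈ E` and `v ∈ F`. -/
def Hset (T : C(X, E) → C(Y, F)) (A : Subspace 𝕂 C(X, E))
    (B : Subspace 𝕂 C(Y, F)) (x : X) : Set Y :=
  {y | ∃ u : E, ‖u‖ = 1 ∧ ∃ v : F, ‖v‖ = 1 ∧ T '' Vset A x {u} ⊆ Vset B y {v}}

/-!
If `y ∈ H_x`, then `(T f)(y)` depends only on `f(x)`. Indeed, for `q ∈ A` with `q(x) = 0`,
rescaled so that `‖q‖ ≤ 3/4`, Bishop's `1/4`–`3/4` series of strong-boundary functions gives
`P ∈ A` such that `P` and `q + P` both lie in `V_{x,{u}}`; hence `(T q)(y) = 0`.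

Now let `g ∈ A` peak at `x'` with `g(x') = u'` and `‖g(x)‖ < 1/2`, and let `c ∈ A` satisfy
`c(x) = g(x)`, `‖c‖ ≤ ‖g(x)‖`. If `y ∈ H_x ∩ H_{x'}`, then
`1 = ‖(T g)(y)‖ = ‖(T c)(y)‖ ≤ ‖c‖ < 1/2`.
-/

open Filter Topology

theorem hasSum_three_quarters_pow_add_div_four (N : ℕ) :
    HasSum (fun n => (3 / 4 : ℝ) ^ (n + N) / 4) ((3 / 4) ^ N) := by
  have h := (hasSum_geometric_of_lt_one (r := (3 / 4 : ℝ)) (by norm_num) (by norm_num)).mul_left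
    ((3 / 4) ^ N / 4)
  rw [show (3 / 4 : ℝ) ^ N / 4 * (1 - 3 / 4)⁻¹ = (3 / 4) ^ N by norm_num] at h
  have hfun : (fun n => (3 / 4 : ℝ) ^ N / 4 * (3 / 4) ^ n) = fun n => (3 / 4) ^ (n + N) / 4 :=
    funext fun n => by rw [pow_add]; ring
  rwa [hfun] at h

theorem add_tsum_three_quarters_pow_mul_le_one {t : ℝ} (ht : t ≤ 3 / 4) {a : ℕ → ℝ}
    (ha₀ : ∀ n, 0 ≤ a n) (ha₁ : ∀ n, a n ≤ 1)
    (ha : ∀ n, (3 / 4 : ℝ) ^ n / 2 ≤ t → a n ≤ 1 / 16) :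
    t + ∑' n, (3 / 4 : ℝ) ^ n / 4 * a n ≤ 1 := by
  have hc : HasSum (fun n => (3 / 4 : ℝ) ^ n / 4) 1 := by
    simpa using hasSum_three_quarters_pow_add_div_four 0
  have hca : Summable fun n => (3 / 4 : ℝ) ^ n / 4 * a n :=
    hc.summable.of_nonneg_of_le (fun n => mul_nonneg (by positivity) (ha₀ n))
      fun n => mul_le_of_le_one_right (by positivity) (ha₁ n)
  by_cases hex : ∃ n, (3 / 4 : ℝ) ^ n / 2 ≤ t
  · classical
    set N := Nat.find hex
    -- by minimality of `N`, `t < (3/4)^(N-1) / 2 = 2/3 * (3/4)^N` when `N > 0`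
    have ht_le : t ≤ 15 / 16 * (3 / 4) ^ N := by
      rcases Nat.eq_zero_or_eq_succ_pred N with hN | hN
      · rw [hN]
        linarith
      · have hprev := Nat.find_min hex (m := N.pred) (by omega)
        push Not at hprev
        rw [hN, pow_succ]
        nlinarith [pow_nonneg (show (0 : ℝ) ≤ 3 / 4 by norm_num) N.pred]
    have hhead : ∑ n ∈ Finset.range N, (3 / 4 : ℝ) ^ n / 4 * a n
        ≤ ∑ n ∈ Finset.range N, (3 / 4 : ℝ) ^ n / 4 :=
      Finset.sum_le_sum fun n _ => mul_le_of_le_one_right (by positivity) (ha₁ n)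
    have htail : ∑' n, (3 / 4 : ℝ) ^ (n + N) / 4 * a (n + N) ≤ (3 / 4) ^ N / 16 := by
      have hsmall : ∀ n, a (n + N) ≤ 1 / 16 := fun n =>
        ha _ ((div_le_div_of_nonneg_right (pow_le_pow_of_le_one (by norm_num) (by norm_num)
          (Nat.le_add_left N n)) (by norm_num)).trans (Nat.find_spec hex))
      calc ∑' n, (3 / 4 : ℝ) ^ (n + N) / 4 * a (n + N)
          ≤ ∑' n, (3 / 4 : ℝ) ^ (n + N) / 4 * (1 / 16) :=
            ((summable_nat_add_iff N).mpr hca).tsum_le_tsum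
              (fun n => mul_le_mul_of_nonneg_left (hsmall n) (by positivity))
              ((hasSum_three_quarters_pow_add_div_four N).mul_right _).summable
        _ = (3 / 4) ^ N / 16 := by
          rw [((hasSum_three_quarters_pow_add_div_four N).mul_right _).tsum_eq]
          ring
    have hc_split := hc.summable.sum_add_tsum_nat_add N
    rw [hc.tsum_eq, (hasSum_three_quarters_pow_add_div_four N).tsum_eq] at hc_split
    rw [← hca.sum_add_tsum_nat_add N]
    linarith
  · push Not at hex
    have ht₀ : t ≤ 0 := by
      have hlim : Tendsto (fun n : ℕ => (3 / 4 : ℝ) ^ n / 2) atTop (𝓝 0) := by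
        simpa using (tendsto_pow_atTop_nhds_zero_of_lt_one (r := (3 / 4 : ℝ)) (by norm_num)
          (by norm_num)).div_const 2
      exact ge_of_tendsto' hlim fun n => (hex n).le
    have hsum : ∑' n, (3 / 4 : ℝ) ^ n / 4 * a n ≤ 1 :=
      hc.tsum_eq ▸ hca.tsum_le_tsum (fun n => mul_le_of_le_one_right (by positivity) (ha₁ n))
        hc.summable
    linarith

section StrongBoundaryPoints

variable {Z M : Type*} [TopologicalSpace Z] [CompactSpace Z]
  [NormedAddCommGroup M] [NormedSpace ℝ M] {A : Submodule ℝ C(Z, M)} {x : Z}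

theorem exists_mem_apply_eq_norm_le (hx : x ∈ strongBoundaryPoints (A : Set C(Z, M)))
    (w : M) : ∃ c ∈ A, c x = w ∧ ‖c‖ ≤ ‖w‖ := by
  rcases eq_or_ne w 0 with rfl | hw
  · exact ⟨0, A.zero_mem, rfl, by simp⟩
  have hw' : ‖w‖ ≠ 0 := norm_ne_zero_iff.mpr hw
  obtain ⟨f, hfA, hf_norm, hfx, -⟩ := hx univ univ_mem 1 one_pos (‖w‖⁻¹ • w)
    (by rw [norm_smul, norm_inv, norm_norm, inv_mul_cancel₀ hw'])
  refine ⟨‖w‖ • f, A.smul_mem _ hfA, ?_, ?_⟩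
  · rw [ContinuousMap.smul_apply, hfx, smul_inv_smul₀ hw']
  · rw [norm_smul, hf_norm, norm_norm, mul_one]

variable [CompleteSpace M]

theorem exists_mem_apply_eq_norm_le_one_norm_add_le_one (hA : IsClosed (A : Set C(Z, M)))
    (hx : x ∈ strongBoundaryPoints (A : Set C(Z, M))) {u : M} (hu : ‖u‖ = 1)
    {q : C(Z, M)} (hqx : q x = 0) (hq : ‖q‖ ≤ 3 / 4) :
    ∃ P ∈ A, P x = u ∧ ‖P‖ ≤ 1 ∧ ‖q + P‖ ≤ 1 := by
  have hU : ∀ n : ℕ, {z | ‖q z‖ < (3 / 4 : ℝ) ^ n / 2} ∈ 𝓝 x := fun n =>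
    (isOpen_lt q.continuous.norm continuous_const).mem_nhds (by simp [hqx])
  choose p hpA hp_norm hpx hp_small using
    fun n => hx _ (hU n) (1 / 16) (by norm_num) u hu
  have hc : HasSum (fun n => (3 / 4 : ℝ) ^ n / 4) 1 := by
    simpa using hasSum_three_quarters_pow_add_div_four 0
  have hterm_norm : ∀ n, ‖((3 / 4 : ℝ) ^ n / 4) • p n‖ = (3 / 4) ^ n / 4 := fun n => by
    rw [norm_smul, hp_norm, mul_one, Real.norm_of_nonneg (by positivity)]
  have hsum : Summable fun n => ((3 / 4 : ℝ) ^ n / 4) • p n :=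
    .of_norm (by simpa only [hterm_norm] using hc.summable)
  set P := ∑' n, ((3 / 4 : ℝ) ^ n / 4) • p n
  have hP_apply : ∀ z, P z = ∑' n, ((3 / 4 : ℝ) ^ n / 4) • p n z := fun z =>
    (ContinuousMap.tsum_apply hsum z).symm
  have hP_apply_norm : ∀ z, ‖P z‖ ≤ ∑' n, (3 / 4 : ℝ) ^ n / 4 * ‖p n z‖ := fun z => by
    have hterm : ∀ n, ‖((3 / 4 : ℝ) ^ n / 4) • p n z‖ = (3 / 4 : ℝ) ^ n / 4 * ‖p n z‖ :=
      fun n => by rw [norm_smul, Real.norm_of_nonneg (by positivity)]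
    simp only [hP_apply, ← hterm]
    refine norm_tsum_le_tsum_norm (hc.summable.of_nonneg_of_le (fun _ => norm_nonneg _) ?_)
    intro n
    rw [hterm]
    exact mul_le_of_le_one_right (by positivity) ((p n).norm_coe_le_norm z |>.trans_eq (hp_norm n))
  refine ⟨P, tsum_mem hA fun n => A.smul_mem _ (hpA n), ?_, ?_, ?_⟩
  · rw [hP_apply]
    simp only [hpx]
    rw [(hc.smul_const u).tsum_eq, one_smul]
  · refine (norm_tsum_le_tsum_norm ?_).trans ?_ <;> simp only [hterm_norm]
    exacts [hc.summable, hc.tsum_eq.le]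
  · refine (ContinuousMap.norm_le _ zero_le_one).mpr fun z => ?_
    refine (norm_add_le _ _).trans ((add_le_add le_rfl (hP_apply_norm z)).trans ?_)
    exact add_tsum_three_quarters_pow_mul_le_one ((q.norm_coe_le_norm z).trans hq)
      (fun n => norm_nonneg _) (fun n => (p n).norm_coe_le_norm z |>.trans_eq (hp_norm n))
      fun n hn => (hp_small n z (not_lt.mpr hn)).le

theorem exists_mem_Vset_add_mem_Vset (hA : IsClosed (A : Set C(Z, M)))
    (hx : x ∈ strongBoundaryPoints (A : Set C(Z, M))) {u : M} (hu : ‖u‖ = 1)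
    {q : C(Z, M)} (hqA : q ∈ A) (hqx : q x = 0) (hq : ‖q‖ ≤ 3 / 4) :
    ∃ P ∈ Vset A x {u}, q + P ∈ Vset A x {u} := by
  obtain ⟨P, hPA, hPx, hP, hqP⟩ := exists_mem_apply_eq_norm_le_one_norm_add_le_one hA hx hu hqx hq
  have hqPx : (q + P) x = u := by rw [ContinuousMap.add_apply, hqx, hPx, zero_add]
  exact ⟨P, ⟨hPA, le_antisymm hP (hu ▸ hPx ▸ P.norm_coe_le_norm x), hPx⟩,
    ⟨A.add_mem hqA hPA, le_antisymm hqP (hu ▸ hqPx ▸ (q + P).norm_coe_le_norm x), hqPx⟩⟩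

variable {W N : Type*} [TopologicalSpace W] [NormedAddCommGroup N] [NormedSpace ℝ N]
  {T : C(Z, M) → C(W, N)}

theorem map_apply_eq_zero_of_apply_eq_zero (hA : IsClosed (A : Set C(Z, M)))
    (hx : x ∈ strongBoundaryPoints (A : Set C(Z, M)))
    (hadd : ∀ f ∈ A, ∀ g ∈ A, T (f + g) = T f + T g)
    (hsmul : ∀ r : ℝ, ∀ f ∈ A, T (r • f) = r • T f) {u : M} (hu : ‖u‖ = 1) {y : W} {v : N}
    (hT : ∀ f ∈ Vset A x {u}, T f y = v) {q : C(Z, M)} (hqA : q ∈ A) (hqx : q x = 0) :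
    T q y = 0 := by
  rcases eq_or_ne q 0 with rfl | hq
  · simpa using congrArg (· y) (hsmul 0 0 A.zero_mem)
  have ht : (3 / 4 / ‖q‖ : ℝ) ≠ 0 := by positivity
  obtain ⟨P, hP, hqP⟩ := exists_mem_Vset_add_mem_Vset hA hx hu (A.smul_mem (3 / 4 / ‖q‖) hqA)
    (by simp [hqx])
    (by rw [norm_smul, norm_div, norm_norm, div_mul_cancel₀ _ (norm_ne_zero_iff.mpr hq)]; norm_num)
  have key := hT _ hqP
  rw [hadd _ (A.smul_mem _ hqA) _ hP.1, hsmul _ _ hqA, ContinuousMap.add_apply, hT _ hP,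
    add_eq_right, ContinuousMap.smul_apply, smul_eq_zero] at key
  exact key.resolve_left ht

end StrongBoundaryPoints

theorem stmt7_general (A : Subspace 𝕂 C(X, E)) (hA : IsClosed (A : Set C(X, E)))
    (B : Subspace 𝕂 C(Y, F)) (T : C(X, E) → C(Y, F))
    (hadd : ∀ f ∈ A, ∀ g ∈ A, T (f + g) = T f + T g)
    (hsmul : ∀ r : ℝ, ∀ f ∈ A, T (r • f) = r • T f)
    (hiso : ∀ f ∈ A, ∀ g ∈ A, ‖T f - T g‖ = ‖f - g‖)
    (x x' : X) (hx : x ∈ strongBoundaryPoints (A : Set C(X, E)))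
    (hx' : x' ∈ strongBoundaryPoints (A : Set C(X, E))) (hxx' : x ≠ x') :
    Hset T A B x ∩ Hset T A B x' = ∅ := by
  rw [Set.eq_empty_iff_forall_notMem]
  rintro y ⟨⟨u, hu, v, -, hTu⟩, ⟨u', hu', v', hv', hTu'⟩⟩
  obtain ⟨g, hgA, hg_norm, hgx', hgx⟩ :=
    hx' {x}ᶜ (compl_singleton_mem_nhds hxx'.symm) (1 / 2) (by norm_num) u' hu'
  obtain ⟨c, hcA, hcx, hc_norm⟩ := exists_mem_apply_eq_norm_le (A := A.restrictScalars ℝ) hx (g x)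
  have hgc : T (g - c) y = 0 :=
    map_apply_eq_zero_of_apply_eq_zero (A := A.restrictScalars ℝ) hA hx hadd hsmul hu
      (fun f hf => (hTu ⟨f, hf, rfl⟩).2.2) (A.sub_mem hgA hcA) (by simp [hcx])
  have hTg : T g y = T c y := by
    simpa [hgc] using congrArg (· y) (hadd (g - c) (A.sub_mem hgA hcA) c hcA)
  have hT0 : T 0 = 0 := by simpa using hsmul 0 0 A.zero_mem
  have : (1 : ℝ) < 1 := calc
    1 = ‖T g y‖ := by rw [(hTu' ⟨g, ⟨hgA, hg_norm, hgx'⟩, rfl⟩).2.2, hv']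
    _ = ‖T c y‖ := by rw [hTg]
    _ ≤ ‖T c‖ := (T c).norm_coe_le_norm y
    _ = ‖c‖ := by simpa [hT0] using hiso c hcA 0 A.zero_mem
    _ ≤ ‖g x‖ := hc_norm
    _ < 1 := (hgx x (by simp)).trans (by norm_num)
  exact lt_irrefl _ this

/-- If `T : A → B` is a surjective real-linear isometry and `x ≠ x'` are strong
boundary points of the closed subspace `A`, then `H_x ∩ H_{x'} = ∅`. -/
theorem stmt7 (A : Subspace 𝕂 C(X, E)) (hA : IsClosed (A : Set C(X, E)))
    (B : Subspace 𝕂 C(Y, F)) (T : C(X, E) → C(Y, F))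
    (hmap : ∀ f ∈ A, T f ∈ B)
    (hsurj : ∀ g ∈ B, ∃ f ∈ A, T f = g)
    (hadd : ∀ f ∈ A, ∀ g ∈ A, T (f + g) = T f + T g)
    (hsmul : ∀ r : ℝ, ∀ f ∈ A, T (r • f) = r • T f)
    (hiso : ∀ f ∈ A, ∀ g ∈ A, ‖T f - T g‖ = ‖f - g‖)
    (x x' : X) (hx : x ∈ strongBoundaryPoints (A : Set C(X, E)))
    (hx' : x' ∈ strongBoundaryPoints (A : Set C(X, E))) (hxx' : x ≠ x') :
    Hset T A B x ∩ Hset T A B x' = ∅ :=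
  stmt7_general A hA B T hadd hsmul hiso x x' hx hx' hxx'
end

section
/- Let X, Y be compact Hausdorff spaces, E, F Banach spaces over 𝕂 ∈ {ℝ, ℂ}, A an E-separating 𝕂-linear subspace of C(X,E), B a 𝕂-linear subspace of C(Y,F), and T : A → B a surjective real-linear isometry. If x, x' ∈ Ω(A) are distinct points, then H_x ∩ H_{x'} = ∅. -/
open Set Metric

variable {𝕂 : Type*} [RCLike 𝕂]
variable {X : Type*} [TopologicalSpace X] [CompactSpace X] [T2Space X]
variable {Y : Type*} [TopologicalSpace Y] [CompactSpace Y] [T2Space Y]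
variable {E : Type*} [NormedAddCommGroup E] [NormedSpace ℝ E] [NormedSpace 𝕂 E]
  [IsScalarTower ℝ 𝕂 E] [CompleteSpace E]
variable {F : Type*} [NormedAddCommGroup F] [NormedSpace ℝ F] [NormedSpace 𝕂 F]
  [IsScalarTower ℝ 𝕂 F] [CompleteSpace F]

/-- `A` is `E`-separating: for distinct `x, x'` and every `u ∈ E` there is `f ∈ A`
with `f x = 0`, `f x' = u` and `‖f‖ = ‖u‖`. -/
def ESeparating (A : Subspace 𝕂 C(X, E)) : Prop :=
  ∀ x x' : X, x ≠ x' → ∀ u : E, ∃ f ∈ A, f x = 0 ∧ f x' = u ∧ ‖f‖ = ‖u‖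

/-- The set `Ω(A)` of Bishop points of `A`. -/
def bishopPoints (A : Subspace 𝕂 C(X, E)) : Set X :=
  {x | ∀ u : E, ‖u‖ = 1 → ∀ f ∈ A, f x = 0 →
    ∃ s : ℝ, 0 < s ∧ ∃ g ∈ Vset A x {u}, ∃ h ∈ Vset A x {u}, f = s • (g - h)}

/-- If `A` is `E`-separating, `T : A → B` is a surjective real-linear isometry and
`x ≠ x'` are Bishop points of `A`, then `H_x ∩ H_{x'} = ∅`. -/
theorem stmt8 (A : Subspace 𝕂 C(X, E)) (hAsep : ESeparating A)
    (B : Subspace 𝕂 C(Y, F)) (T : C(X, E) → C(Y, F))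
    (hmap : ∀ f ∈ A, T f ∈ B)
    (hsurj : ∀ g ∈ B, ∃ f ∈ A, T f = g)
    (hadd : ∀ f ∈ A, ∀ g ∈ A, T (f + g) = T f + T g)
    (hsmul : ∀ r : ℝ, ∀ f ∈ A, T (r • f) = r • T f)
    (hiso : ∀ f ∈ A, ∀ g ∈ A, ‖T f - T g‖ = ‖f - g‖)
    (x x' : X) (hx : x ∈ bishopPoints A) (hx' : x' ∈ bishopPoints A)
    (hxx' : x ≠ x') :
    Hset T A B x ∩ Hset T A B x' = ∅ := by
  ext y
  simp only [Set.mem_inter_iff, Set.mem_empty_iff_false, iff_false, not_and]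
  intro hy hy'
  obtain ⟨u, hu, v, hv, hT⟩ := hy
  obtain ⟨u', hu', v', hv', hT'⟩ := hy'
  -- pick f ∈ A with f x' = 0, f x = u, ‖f‖ = 1
  obtain ⟨f, hfA, hfx', hfx, hfn⟩ := hAsep x' x (Ne.symm hxx') u
  rw [hu] at hfn
  -- x' is a Bishop point
  obtain ⟨s, hs, g, ⟨hgA, hgn, hgx⟩, h, ⟨hhA, hhn, hhx⟩, hfe⟩ :=
    hx' u' hu' f hfA hfx'
  have hghA : g - h ∈ A := A.sub_mem hgA hhA
  have hTgh : T (g - h) = T g - T h := by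
    have h1 : g - h = g + (-1 : ℝ) • h := by
      rw [neg_one_smul]; abel
    have h2 : (-1 : ℝ) • h ∈ A := by
      rw [neg_one_smul]; exact A.neg_mem hhA
    rw [h1, hadd g hgA _ h2, hsmul (-1) h hhA, neg_one_smul]
    abel
  have hTf : T f = s • (T g - T h) := by
    rw [hfe, hsmul s _ hghA, hTgh]
  -- evaluate at y
  have hTgy : (T g) y = v' := (hT' ⟨g, ⟨hgA, hgn, hgx⟩, rfl⟩).2.2
  have hThy : (T h) y = v' := (hT' ⟨h, ⟨hhA, hhn, hhx⟩, rfl⟩).2.2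
  have hTfy0 : (T f) y = 0 := by
    rw [hTf]
    simp [hTgy, hThy]
  have hTfy : (T f) y = v := (hT ⟨f, ⟨hfA, hfn, hfx⟩, rfl⟩).2.2
  rw [hTfy0] at hTfy
  rw [← hTfy, norm_zero] at hv
  norm_num at hv
end

section
/- Let X, Y be compact Hausdorff spaces, E, F Banach spaces over 𝕂 ∈ {ℝ, ℂ}, A and B 𝕂-linear subspaces of C(X,E) and C(Y,F), respectively, and T : A → B a surjective real-linear isometry. If x ∈ η₂(A) ∩ Ω(A) ∩ X₀ and y ∈ H_x, then Tf(y) = 0 for every f ∈ A with f(x) = 0. -/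
open Set Metric

variable {𝕂 : Type*} [RCLike 𝕂]
variable {X : Type*} [TopologicalSpace X] [CompactSpace X] [T2Space X]
variable {Y : Type*} [TopologicalSpace Y] [CompactSpace Y] [T2Space Y]
variable {E : Type*} [NormedAddCommGroup E] [NormedSpace ℝ E] [NormedSpace 𝕂 E]
  [IsScalarTower ℝ 𝕂 E] [CompleteSpace E]
variable {F : Type*} [NormedAddCommGroup F] [NormedSpace ℝ F] [NormedSpace 𝕂 F]
  [IsScalarTower ℝ 𝕂 F] [CompleteSpace F]

/-- `C` is a maximal convex subset of `S` (convexity over `ℝ`). -/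
def MaxConvexIn {M : Type*} [AddCommGroup M] [Module ℝ M] (S C : Set M) : Prop :=
  C ⊆ S ∧ Convex ℝ C ∧ ∀ C' : Set M, C' ⊆ S → Convex ℝ C' → C ⊆ C' → C' = C

/-- The unit sphere `S(A)` of the subspace `A` of `C(X,E)`. -/
def unitSphereOf (A : Subspace 𝕂 C(X, E)) : Set C(X, E) :=
  {f | f ∈ A ∧ ‖f‖ = 1}

/-- `η₂(A)`: points of type two for `A`. -/
def typeTwoPoints (A : Subspace 𝕂 C(X, E)) : Set X :=
  {x | ∀ K K' : Set E, MaxConvexIn (sphere (0 : E) 1) K →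
    MaxConvexIn (sphere (0 : E) 1) K' →
    ∀ y : X, Vset A x K ⊆ Vset A y K' → x = y}

/-- `X₀ = {x ∈ X : S(E) ⊆ {f(x) : f ∈ S(A)}}`. -/
def X0set (A : Subspace 𝕂 C(X, E)) : Set X :=
  {x | sphere (0 : E) 1 ⊆ (fun f : C(X, E) => f x) '' unitSphereOf A}

/-- If `T : A → B` is a surjective real-linear isometry, `x ∈ η₂(A) ∩ Ω(A) ∩ X₀`
and `y ∈ H_x`, then `Tf(y) = 0` for every `f ∈ A` with `f(x) = 0`. -/
theorem stmt9 (A : Subspace 𝕂 C(X, E)) (B : Subspace 𝕂 C(Y, F))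
    (T : C(X, E) → C(Y, F))
    (hmap : ∀ f ∈ A, T f ∈ B)
    (hsurj : ∀ g ∈ B, ∃ f ∈ A, T f = g)
    (hadd : ∀ f ∈ A, ∀ g ∈ A, T (f + g) = T f + T g)
    (hsmul : ∀ r : ℝ, ∀ f ∈ A, T (r • f) = r • T f)
    (hiso : ∀ f ∈ A, ∀ g ∈ A, ‖T f - T g‖ = ‖f - g‖)
    (x : X) (hx : x ∈ typeTwoPoints A ∩ bishopPoints A ∩ X0set A)
    (y : Y) (hy : y ∈ Hset T A B x)
    (f : C(X, E)) (hf : f ∈ A) (hfx : f x = 0) :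
    T f y = 0 := by
  obtain ⟨u, hu, v, hv, hsub⟩ := hy
  obtain ⟨s, hs, g, hg, h, hh, hfeq⟩ := hx.1.2 u hu f hf hfx
  have hTgy : T g y = v := (hsub ⟨g, hg, rfl⟩).2.2
  have hThy : T h y = v := (hsub ⟨h, hh, rfl⟩).2.2
  have hgA := hg.1
  have hhA := hh.1
  have hTneg : T (-h) = -T h := by
    have := hsmul (-1) h hhA
    rw [neg_one_smul, neg_one_smul] at this
    exact this
  have hstep : T f = s • (T g + T (-h)) := by
    rw [hfeq, sub_eq_add_neg, hsmul s _ (A.add_mem hgA (A.neg_mem hhA)),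
      hadd g hgA (-h) (A.neg_mem hhA)]
  rw [hstep]
  simp [hTneg, hTgy, hThy]
end

section
/- Let X, Y be compact Hausdorff spaces, E, F Banach spaces over 𝕂 ∈ {ℝ, ℂ} with F strictly convex, A and B 𝕂-linear subspaces of C(X,E) and C(Y,F), respectively, where A contains all constant functions, and let T : A → B be a surjective (not necessarily linear) isometry. Then there exist a subset Y₀ of Y, a continuous surjection Φ : Y₀ → Θ(Ā), and a family {V_y}_{y∈Y₀} of real-linear operators from E to F with ‖V_y‖ = 1 such that Tf(y) = T0(y) + V_y(f(Φ(y))) for all f ∈ A and y ∈ Y₀, and moreover the map y ↦ V_y from Y₀ into the bounded operators from E to F is continuous with respect to the strong operator topology (i.e., for every u ∈ E the map y ↦ V_y(u) is continuous on Y₀). -/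
/-!
By Mazur–Ulam, `f ↦ T f - T 0` is a real-linear isometry of `A` onto `B`, and it extends to a
linear isometry `S` of `Ā` into `C(Y, F)`. Put `V_y u = S (const u) y`. Fix `u₀` of norm one and
a strong boundary point `x`. The functions of `Ā` of norm at most one with `f x = u₀` form a
convex set of norm-one functions, so their images under `S` have a common peak point `y`, and
strict convexity of `F` forces them all to take the value `V_y u₀` there. Adding to an `f` with
`f x = 0` a multiple of such a function peaking near `x` gives
`‖2‖f‖ • V_y u₀ ± S f y‖ ≤ 2‖f‖`, hence `S f y = 0` by strict convexity again, that is,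
`S f y = V_y (f x)` for all `f`. Peaking functions also show that the point `x` with this
property is determined by `y` and depends continuously on it.
-/

open Set Metric

variable {𝕂 : Type*} [RCLike 𝕂]
variable {X : Type*} [TopologicalSpace X] [CompactSpace X] [T2Space X]
variable {Y : Type*} [TopologicalSpace Y] [CompactSpace Y] [T2Space Y]
variable {E : Type*} [NormedAddCommGroup E] [NormedSpace ℝ E] [NormedSpace 𝕂 E]
  [IsScalarTower ℝ 𝕂 E] [CompleteSpace E]
variable {F : Type*} [NormedAddCommGroup F] [NormedSpace ℝ F] [NormedSpace 𝕂 F]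
  [IsScalarTower ℝ 𝕂 F] [CompleteSpace F]

section StrictConvex

variable {F : Type*} [NormedAddCommGroup F] [NormedSpace ℝ F] [StrictConvexSpace ℝ F]

theorem Convex.subsingleton_of_subset_sphere {s : Set F} {r : ℝ} (hs : Convex ℝ s)
    (hr : s ⊆ sphere 0 r) : s.Subsingleton := by
  intro v hv w hw
  by_contra hne
  have hmid : (1 / 2 : ℝ) • (v + w) ∈ s := by
    simpa only [smul_add] using hs hv hw (by norm_num) (by norm_num) (add_halves 1)
  have hlt := (norm_midpoint_lt_iff (by rw [mem_sphere_zero_iff_norm.1 (hr hv),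
    mem_sphere_zero_iff_norm.1 (hr hw)])).2 hne
  rw [mem_sphere_zero_iff_norm.1 (hr hmid), mem_sphere_zero_iff_norm.1 (hr hv)] at hlt
  exact hlt.false

theorem eq_zero_of_norm_add_le_of_norm_sub_le {w a : F} (h₁ : ‖w + a‖ ≤ ‖w‖)
    (h₂ : ‖w - a‖ ≤ ‖w‖) : a = 0 := by
  have hsum : (w + a) + (w - a) = (2 : ℝ) • w := by rw [two_smul]; abel
  have hnorm : ‖(w + a) + (w - a)‖ = 2 * ‖w‖ := by rw [hsum, norm_smul]; norm_num
  have hle := norm_add_le (w + a) (w - a)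
  have heq : w + a = w - a :=
    eq_of_norm_eq_of_norm_add_eq (by linarith) (by linarith)
  have h2a : (2 : ℝ) • a = 0 := by
    rw [two_smul, ← sub_eq_zero_of_eq heq]; abel
  exact (smul_eq_zero.1 h2a).resolve_left two_ne_zero

end StrictConvex

theorem ContinuousMap.exists_forall_norm_apply_eq_one_of_convex {Y F : Type*}
    [TopologicalSpace Y] [CompactSpace Y] [NormedAddCommGroup F] [NormedSpace ℝ F] {K : Set C(Y, F)}
    (hK : Convex ℝ K) (hne : K.Nonempty) (hnorm : ∀ g ∈ K, ‖g‖ = 1) :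
    ∃ y, ∀ g ∈ K, ‖g y‖ = 1 := by
  obtain ⟨g₀, hg₀⟩ := hne
  have : Nonempty Y := by
    by_contra hY
    rw [not_nonempty_iff] at hY
    simpa [Subsingleton.elim g₀ 0] using hnorm g₀ hg₀
  have hle : ∀ g ∈ K, ∀ y, ‖g y‖ ≤ 1 := fun g hg y =>
    (g.norm_coe_le_norm y).trans (hnorm g hg).le
  let peak : K → Set Y := fun g => {y | ‖(g : C(Y, F)) y‖ = 1}
  have hclosed : ∀ g, IsClosed (peak g) := fun g =>
    isClosed_eq (map_continuous (g : C(Y, F))).norm continuous_const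
  have hpeak_nonempty : ∀ g, (peak g).Nonempty := by
    rintro ⟨g, hg⟩
    obtain ⟨y, -, hy⟩ := isCompact_univ.exists_isMaxOn univ_nonempty
      (map_continuous g).norm.continuousOn
    refine ⟨y, le_antisymm (hle g hg y) ?_⟩
    rw [← hnorm g hg]
    exact (g.norm_le (norm_nonneg _)).2 fun z => hy (mem_univ z)
  -- a point where the midpoint of `g` and `g'` has norm one is a peak point of both
  have hdir : Directed (· ⊇ ·) peak := by
    rintro ⟨g, hg⟩ ⟨g', hg'⟩
    have hmid : (1 / 2 : ℝ) • (g + g') ∈ K := by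
      simpa only [smul_add] using hK hg hg' (by norm_num) (by norm_num) (add_halves 1)
    have hboth : ∀ y ∈ peak ⟨_, hmid⟩, ‖g y‖ = 1 ∧ ‖g' y‖ = 1 := fun y hy => by
      have hsum : ‖(1 / 2 : ℝ) • (g y + g' y)‖ = 1 := hy
      rw [norm_smul] at hsum
      norm_num at hsum
      have := norm_add_le (g y) (g' y)
      constructor <;> linarith [hle g hg y, hle g' hg' y]
    exact ⟨⟨_, hmid⟩, fun y hy => (hboth y hy).1, fun y hy => (hboth y hy).2⟩
  have : Nonempty K := ⟨⟨g₀, hg₀⟩⟩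
  obtain ⟨y, hy⟩ := IsCompact.nonempty_iInter_of_directed_nonempty_isCompact_isClosed peak
    hdir hpeak_nonempty (fun g => (hclosed g).isCompact) hclosed
  exact ⟨y, fun g hg => mem_iInter.1 hy ⟨g, hg⟩⟩

section Extension

variable {P Q : Type*} [NormedAddCommGroup P] [NormedAddCommGroup Q]

theorem LinearIsometry.exists_extend_topologicalClosure {𝕜 : Type*}
    [NontriviallyNormedField 𝕜] [NormedSpace 𝕜 P] [NormedSpace 𝕜 Q] [CompleteSpace Q]
    {A : Submodule 𝕜 P} (L : A →ₗᵢ[𝕜] Q) :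
    ∃ S : A.topologicalClosure →ₗᵢ[𝕜] Q,
      ∀ f : A, S (Submodule.inclusion A.le_topologicalClosure f) = L f := by
  let ι := Submodule.inclusion A.le_topologicalClosure
  have hdense : DenseRange ι :=
    (denseRange_inclusion_iff A.le_topologicalClosure).2 A.topologicalClosure_coe.le
  have hbound : ∃ C, ∀ f, ‖L.toLinearMap f‖ ≤ C * ‖ι f‖ := ⟨1, fun f => by simp [ι]⟩
  let S₀ := L.toLinearMap.extendOfNorm ι
  have hS₀ : ∀ f, S₀ (ι f) = L f := LinearMap.extendOfNorm_eq hdense hbound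
  refine ⟨⟨S₀.toLinearMap, fun f => ?_⟩, hS₀⟩
  refine hdense.induction_on f (isClosed_eq S₀.continuous.norm continuous_norm)
    fun f => ?_
  change ‖S₀ (ι f)‖ = ‖ι f‖
  rw [hS₀, L.norm_map]
  rfl

theorem exists_linearIsometry_apply_eq_sub [NormedSpace ℝ P] [NormedSpace ℝ Q]
    {A : Submodule ℝ P} {B : Submodule ℝ Q} {T : P → Q} (hmap : ∀ f ∈ A, T f ∈ B)
    (hsurj : ∀ g ∈ B, ∃ f ∈ A, T f = g) (hiso : ∀ f ∈ A, ∀ g ∈ A, ‖T f - T g‖ = ‖f - g‖) :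
    ∃ L : A →ₗᵢ[ℝ] Q, ∀ f : A, L f = T f - T 0 := by
  have hT0 : T 0 ∈ B := hmap 0 A.zero_mem
  let φ : A → B := fun f => ⟨T f - T 0, sub_mem (hmap f f.2) hT0⟩
  have hφ : Isometry φ := Isometry.of_dist_eq fun f g => by
    rw [Subtype.dist_eq, Subtype.dist_eq, dist_eq_norm, dist_eq_norm]
    exact (congrArg norm (sub_sub_sub_cancel_right _ _ _)).trans (hiso f f.2 g g.2)
  have hφ_surj : Function.Surjective φ := by
    rintro ⟨g, hg⟩
    obtain ⟨f, hf, hTf⟩ := hsurj (g + T 0) (add_mem hg hT0)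
    exact ⟨⟨f, hf⟩, Subtype.ext (by simp [φ, hTf])⟩
  let e : A ≃ᵢ B := ⟨Equiv.ofBijective φ ⟨hφ.injective, hφ_surj⟩, hφ⟩
  have he0 : e 0 = 0 := Subtype.ext (sub_self (T 0))
  exact ⟨B.subtypeₗᵢ.comp (e.toRealLinearIsometryEquivOfMapZero he0).toLinearIsometry,
    fun f => rfl⟩

end Extension

namespace LinearIsometry

variable {X Y E F : Type*} [TopologicalSpace X] [CompactSpace X] [TopologicalSpace Y]
  [CompactSpace Y] [NormedAddCommGroup E] [NormedSpace ℝ E] [NormedAddCommGroup F]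
  [NormedSpace ℝ F] {M : Submodule ℝ C(X, E)} (hM : ∀ u, ContinuousMap.const X u ∈ M)
  (S : M →ₗᵢ[ℝ] C(Y, F))

theorem norm_apply_apply_le (f : M) (y : Y) : ‖S f y‖ ≤ ‖f‖ :=
  ((S f).norm_coe_le_norm y).trans (S.norm_map f).le

/-- The operator `V_y` of the representation `S f y = V_y (f x)`. -/
noncomputable def evalConst (y : Y) : E →L[ℝ] F :=
  LinearMap.mkContinuous
    { toFun := fun u => S ⟨ContinuousMap.const X u, hM u⟩ y
      map_add' := fun u v => by
        rw [← ContinuousMap.add_apply, ← map_add]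
        rfl
      map_smul' := fun r u => by
        rw [RingHom.id_apply, ← ContinuousMap.smul_apply, ← map_smul]
        rfl } 1
    fun u => by
      rw [one_mul]
      exact (S.norm_apply_apply_le _ y).trans
        ((ContinuousMap.norm_le _ (norm_nonneg u)).2 fun _ => le_rfl)

@[simp]
theorem evalConst_apply (y : Y) (u : E) :
    S.evalConst hM y u = S ⟨ContinuousMap.const X u, hM u⟩ y :=
  rfl

theorem norm_evalConst_le (y : Y) : ‖S.evalConst hM y‖ ≤ 1 :=
  LinearMap.mkContinuous_norm_le _ zero_le_one _

theorem norm_evalConst_apply_le (y : Y) (u : E) : ‖S.evalConst hM y u‖ ≤ ‖u‖ :=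
  ((S.evalConst hM y).le_opNorm u).trans
    (mul_le_of_le_one_left (norm_nonneg u) (S.norm_evalConst_le hM y))

theorem continuous_evalConst_apply (u : E) : Continuous fun y => S.evalConst hM y u :=
  map_continuous (S ⟨ContinuousMap.const X u, hM u⟩)

def RepresentsAt (y : Y) (x : X) : Prop :=
  ∀ f : M, S f y = S.evalConst hM y ((f : C(X, E)) x)

variable {hM S}

theorem eventually_mem_of_representsAt {x : X} {y : Y}
    (hx : x ∈ strongBoundaryPoints (M : Set C(X, E))) (hy : S.evalConst hM y ≠ 0)
    (hrep : S.RepresentsAt hM y x) {U : Set X} (hU : U ∈ nhds x) :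
    ∀ᶠ y' in nhds y, ∀ x', S.RepresentsAt hM y' x' → x' ∈ U := by
  obtain ⟨u, hu⟩ : ∃ u, S.evalConst hM y u ≠ 0 := by
    by_contra! h
    exact hy (ContinuousLinearMap.ext h)
  have hu0 : u ≠ 0 := by
    rintro rfl
    exact hu (map_zero _)
  set δ := ‖S.evalConst hM y (‖u‖⁻¹ • u)‖
  have hδ : 0 < δ := by
    rw [norm_pos_iff, map_smul]
    exact smul_ne_zero (inv_ne_zero (norm_ne_zero_iff.2 hu0)) hu
  obtain ⟨h, hhM, -, hhx, hsmall⟩ := hx U hU (δ / 2) (half_pos hδ) (‖u‖⁻¹ • u)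
    (norm_smul_inv_norm (𝕜 := ℝ) hu0)
  have hhy : ‖S ⟨h, hhM⟩ y‖ = δ := by rw [hrep, hhx]
  have hopen : IsOpen {y' | δ / 2 < ‖S ⟨h, hhM⟩ y'‖} :=
    isOpen_lt continuous_const (map_continuous _).norm
  filter_upwards [hopen.mem_nhds (by simpa [hhy] using half_lt_self hδ)]
    with y' hy' x' hrep'
  by_contra hx'
  have : ‖S ⟨h, hhM⟩ y'‖ < δ / 2 := by
    rw [hrep']
    exact (S.norm_evalConst_apply_le hM y' _).trans_lt (hsmall x' hx')
  exact lt_asymm hy' this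

theorem eq_of_representsAt [T1Space X] {x x' : X} {y : Y}
    (hx : x ∈ strongBoundaryPoints (M : Set C(X, E))) (hy : S.evalConst hM y ≠ 0)
    (hrep : S.RepresentsAt hM y x) (hrep' : S.RepresentsAt hM y x') : x' = x := by
  by_contra hne
  exact (eventually_mem_of_representsAt hx hy hrep
    (isOpen_compl_singleton.mem_nhds (Ne.symm hne))).self_of_nhds x' hrep' rfl

section Peak

variable {x : X} {y : Y} {u₀ : E} {w : F}
  (hx : x ∈ strongBoundaryPoints (M : Set C(X, E))) (hu₀ : ‖u₀‖ = 1)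
  (hpeak : ∀ h : M, ‖h‖ = 1 → (h : C(X, E)) x = u₀ → S h y = w)
include hx hu₀ hpeak

theorem norm_smul_add_apply_le {f : M} (hf : (f : C(X, E)) x = 0) :
    ‖(2 * ‖f‖) • w + S f y‖ ≤ 2 * ‖f‖ := by
  refine le_of_forall_pos_le_add fun ε hε => ?_
  have hU : {z | ‖(f : C(X, E)) z‖ < ε} ∈ nhds x :=
    (isOpen_lt (map_continuous _).norm continuous_const).mem_nhds (by simpa [hf])
  obtain ⟨h, hhM, hh1, hhx, hsmall⟩ := hx _ hU (1 / 2) one_half_pos u₀ hu₀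
  have hbound : ‖(2 * ‖f‖) • h + (f : C(X, E))‖ ≤ 2 * ‖f‖ + ε := by
    refine (ContinuousMap.norm_le _ (by positivity)).2 fun z => ?_
    have hhz : ‖h z‖ ≤ 1 := hh1 ▸ h.norm_coe_le_norm z
    have hfz : ‖(f : C(X, E)) z‖ ≤ ‖f‖ := (f : C(X, E)).norm_coe_le_norm z
    calc ‖((2 * ‖f‖) • h + (f : C(X, E))) z‖
        ≤ 2 * ‖f‖ * ‖h z‖ + ‖(f : C(X, E)) z‖ := by
          simpa [norm_smul, abs_of_nonneg (norm_nonneg f)] using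
            norm_add_le ((2 * ‖f‖) • h z) ((f : C(X, E)) z)
      _ ≤ 2 * ‖f‖ + ε := by
          by_cases hz : ‖(f : C(X, E)) z‖ < ε
          · nlinarith [norm_nonneg f]
          · nlinarith [hsmall z hz, norm_nonneg f]
  calc ‖(2 * ‖f‖) • w + S f y‖ = ‖S ((2 * ‖f‖) • ⟨h, hhM⟩ + f) y‖ := by
        rw [map_add, map_smul, ContinuousMap.add_apply, ContinuousMap.smul_apply,
          hpeak ⟨h, hhM⟩ hh1 hhx]
    _ ≤ 2 * ‖f‖ + ε := (S.norm_apply_apply_le _ y).trans hbound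

theorem apply_eq_zero_of_apply_eq_zero [StrictConvexSpace ℝ F] (hw : ‖w‖ = 1) {f : M}
    (hf : (f : C(X, E)) x = 0) : S f y = 0 := by
  have hnorm : ‖(2 * ‖f‖) • w‖ = 2 * ‖f‖ := by
    rw [norm_smul, hw, mul_one, Real.norm_of_nonneg (by positivity)]
  refine eq_zero_of_norm_add_le_of_norm_sub_le (w := (2 * ‖f‖) • w) ?_ ?_
  · rw [hnorm]
    exact norm_smul_add_apply_le hx hu₀ hpeak hf
  · have := norm_smul_add_apply_le hx hu₀ hpeak (f := -f) (by simp [hf])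
    rw [norm_neg, map_neg, ContinuousMap.neg_apply, ← sub_eq_add_neg] at this
    rwa [hnorm]

theorem representsAt_of_forall_apply_eq [StrictConvexSpace ℝ F] (hw : ‖w‖ = 1) :
    S.RepresentsAt hM y x := by
  intro f
  set c : M := ⟨ContinuousMap.const X ((f : C(X, E)) x), hM _⟩
  have hzero : S (f - c) y = 0 :=
    apply_eq_zero_of_apply_eq_zero hx hu₀ hpeak hw (by simp [c])
  rwa [map_sub, ContinuousMap.sub_apply, sub_eq_zero] at hzero

end Peak

variable (hM S)

theorem exists_representsAt [Nontrivial E] [StrictConvexSpace ℝ F] {x : X}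
    (hx : x ∈ strongBoundaryPoints (M : Set C(X, E))) :
    ∃ y, ‖S.evalConst hM y‖ = 1 ∧ S.RepresentsAt hM y x := by
  obtain ⟨u₀, hu₀⟩ := exists_norm_eq E zero_le_one
  let c₀ : M := ⟨ContinuousMap.const X u₀, hM u₀⟩
  let K : Set M := closedBall 0 1 ∩ {h | (h : C(X, E)) x = u₀}
  have hK : Convex ℝ K := (convex_closedBall 0 1).inter <| (convex_singleton u₀).linear_preimage
    ((ContinuousMap.evalCLM ℝ x).toLinearMap ∘ₗ M.subtype)
  have hK_norm : ∀ h ∈ K, ‖h‖ = 1 := fun h ⟨h1, hhx⟩ =>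
    le_antisymm (mem_closedBall_zero_iff.1 h1)
      (hu₀ ▸ hhx ▸ (h : C(X, E)).norm_coe_le_norm x)
  have hc₀ : c₀ ∈ K :=
    ⟨mem_closedBall_zero_iff.2 ((ContinuousMap.norm_le _ zero_le_one).2 fun _ => hu₀.le), rfl⟩
  obtain ⟨y, hy⟩ := ContinuousMap.exists_forall_norm_apply_eq_one_of_convex
    (hK.linear_image S.toLinearMap) ⟨S c₀, c₀, hc₀, rfl⟩
    (by rintro _ ⟨h, hh, rfl⟩; exact (S.norm_map h).trans (hK_norm h hh))
  have hw : ‖S.evalConst hM y u₀‖ = 1 := hy _ ⟨c₀, hc₀, rfl⟩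
  have hsub : ((fun h => S h y) '' K).Subsingleton :=
    Convex.subsingleton_of_subset_sphere
      (hK.linear_image ((ContinuousMap.evalCLM ℝ y).toLinearMap ∘ₗ S.toLinearMap))
      (by rintro _ ⟨h, hh, rfl⟩; exact mem_sphere_zero_iff_norm.2 (hy _ ⟨h, hh, rfl⟩))
  have hpeak : ∀ h : M, ‖h‖ = 1 → (h : C(X, E)) x = u₀ → S h y = S.evalConst hM y u₀ :=
    fun h h1 hhx =>
      hsub ⟨h, ⟨mem_closedBall_zero_iff.2 h1.le, hhx⟩, rfl⟩ ⟨c₀, hc₀, rfl⟩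
  refine ⟨y, le_antisymm (S.norm_evalConst_le hM y) ?_,
    representsAt_of_forall_apply_eq hx hu₀ hpeak hw⟩
  calc 1 = ‖S.evalConst hM y u₀‖ := hw.symm
    _ ≤ ‖S.evalConst hM y‖ := by
      simpa [hu₀] using (S.evalConst hM y).le_opNorm u₀

theorem exists_representation [T1Space X] [Nontrivial E] [StrictConvexSpace ℝ F] :
    ∃ (Y₀ : Set Y) (Φ : Y₀ → X), Continuous Φ ∧
      (∀ y, Φ y ∈ strongBoundaryPoints (M : Set C(X, E))) ∧
      (∀ x ∈ strongBoundaryPoints (M : Set C(X, E)), ∃ y, Φ y = x) ∧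
      (∀ y : Y₀, ‖S.evalConst hM y‖ = 1) ∧ ∀ y : Y₀, S.RepresentsAt hM y (Φ y) := by
  let Y₀ : Set Y := {y | ‖S.evalConst hM y‖ = 1 ∧
    ∃ x ∈ strongBoundaryPoints (M : Set C(X, E)), S.RepresentsAt hM y x}
  choose Φ hΦ hrep using fun y : Y₀ => y.2.2
  have hV : ∀ y : Y₀, S.evalConst hM y ≠ 0 := fun y =>
    norm_ne_zero_iff.1 (by rw [y.2.1]; exact one_ne_zero)
  refine ⟨Y₀, Φ, continuous_iff_continuousAt.2 fun y => ?_, hΦ, fun x hx => ?_,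
    fun y => y.2.1, hrep⟩
  · refine Filter.tendsto_def.2 fun U hU => ?_
    exact ((continuous_subtype_val.tendsto y).eventually
      (eventually_mem_of_representsAt (hΦ y) (hV y) (hrep y) hU)).mono fun y' hy' =>
        hy' _ (hrep y')
  · obtain ⟨y, hy, hyx⟩ := exists_representsAt hM S hx
    let y₀ : Y₀ := ⟨y, hy, x, hx, hyx⟩
    exact ⟨y₀, eq_of_representsAt hx (hV y₀) hyx (hrep y₀)⟩

end LinearIsometry

/-- If moreover `A` contains all constant functions, then the representation of
the main theorem holds and the map `y ↦ V_y` is continuous in the strong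
operator topology (i.e. `y ↦ V_y u` is continuous for every `u ∈ E`). -/
theorem stmt11 [Nontrivial E] [StrictConvexSpace ℝ F]
    (A : Subspace 𝕂 C(X, E)) (B : Subspace 𝕂 C(Y, F))
    (hconst : ∀ u : E, ContinuousMap.const X u ∈ A)
    (T : C(X, E) → C(Y, F))
    (hmap : ∀ f ∈ A, T f ∈ B)
    (hsurj : ∀ g ∈ B, ∃ f ∈ A, T f = g)
    (hiso : ∀ f ∈ A, ∀ g ∈ A, ‖T f - T g‖ = ‖f - g‖) :
    ∃ (Y₀ : Set Y) (Φ : Y₀ → X) (V : Y₀ → (E →L[ℝ] F)),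
      Continuous Φ ∧
      (∀ y : Y₀, Φ y ∈ strongBoundaryPoints (closure (A : Set C(X, E)))) ∧
      (∀ x ∈ strongBoundaryPoints (closure (A : Set C(X, E))), ∃ y : Y₀, Φ y = x) ∧
      (∀ y : Y₀, ‖V y‖ = 1) ∧
      (∀ f ∈ A, ∀ y : Y₀, T f (y : Y) = T 0 (y : Y) + V y (f (Φ y))) ∧
      (∀ u : E, Continuous fun y : Y₀ => V y u) := by
  obtain ⟨L, hL⟩ := exists_linearIsometry_apply_eq_sub (A := A.restrictScalars ℝ)
    (B := B.restrictScalars ℝ) hmap hsurj hiso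
  obtain ⟨S, hS⟩ := L.exists_extend_topologicalClosure
  have hM : ∀ u, ContinuousMap.const X u ∈ (A.restrictScalars ℝ).topologicalClosure :=
    fun u => Submodule.le_topologicalClosure _ (hconst u)
  obtain ⟨Y₀, Φ, hΦ, hΦΘ, hΦ_surj, hV, hrep⟩ := S.exists_representation hM
  rw [Submodule.topologicalClosure_coe] at hΦΘ hΦ_surj
  refine ⟨Y₀, Φ, fun y => S.evalConst hM y, hΦ, hΦΘ, hΦ_surj, hV, fun f hf y => ?_,
    fun u => (S.continuous_evalConst_apply hM u).comp continuous_subtype_val⟩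
  have := hrep y (Submodule.inclusion (Submodule.le_topologicalClosure _) ⟨f, hf⟩)
  rw [hS, hL, ContinuousMap.sub_apply] at this
  exact eq_add_of_sub_eq' this
end

section
/- Let X, Y be compact Hausdorff spaces, E, F Banach spaces over 𝕂 ∈ {ℝ, ℂ} with F strictly convex, A and B 𝕂-linear subspaces of C(X,E) and C(Y,F), respectively, both containing all constant functions, and let T : A → B be a surjective (not necessarily linear) isometry which maps the set of constant functions in A onto the set of constant functions in B. Then there exist a subset Y₀ of Y, a continuous surjection Φ : Y₀ → Θ(Ā), and a surjective real-linear isometry V : E → F such that Tf(y) = T0(y) + V(f(Φ(y))) for all f ∈ A and all y ∈ Y₀. -/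
/-!
Mazur–Ulam makes `f ↦ T f - T 0` real-linear; it extends to a linear isometry `G` on the closure
`K` of `A`, and on constants it is `c_u ↦ c_{V u}` for the linear part `V` of the map induced on
constants. Fix a strong boundary point `x` and a unit vector `u₀`. The functions of norm at most one
taking the value `u₀` at `x` form a midpoint-closed family, and by strict convexity of `F` the
closed sets `{y | G q y = V u₀}` form a directed family of nonempty compact sets, so they have a
common point `y`. Adding a peak function at `x` to a small `k` vanishing at `x` shows
`‖V u₀ ± G k y‖ ≤ 1`, and strict convexity again forces `G k y = 0`. Hence `G k y = V (k x)` for all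
`k`, and `Φ y := x` is well defined, since strong boundary points are separated by `K`, and
continuous, since peak functions control neighbourhoods of `Φ y`.
-/

open Set Metric

variable {𝕂 : Type*} [RCLike 𝕂]
variable {X : Type*} [TopologicalSpace X] [CompactSpace X] [T2Space X]
variable {Y : Type*} [TopologicalSpace Y] [CompactSpace Y] [T2Space Y]
variable {E : Type*} [NormedAddCommGroup E] [NormedSpace ℝ E] [NormedSpace 𝕂 E]
  [IsScalarTower ℝ 𝕂 E] [CompleteSpace E]
variable {F : Type*} [NormedAddCommGroup F] [NormedSpace ℝ F] [NormedSpace 𝕂 F]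
  [IsScalarTower ℝ 𝕂 F] [CompleteSpace F]

namespace ContinuousMap

variable {α β : Type*} [TopologicalSpace α] [CompactSpace α] [SeminormedAddCommGroup β]

theorem norm_const_eq [Nonempty α] (b : β) : ‖const α b‖ = ‖b‖ :=
  le_antisymm ((norm_le_of_nonempty _).2 fun _ => le_rfl)
    (by simpa using (const α b).norm_coe_le_norm (Classical.arbitrary α))

theorem exists_norm_apply_eq_norm (f : C(α, β)) (hf : f ≠ 0) : ∃ x, ‖f x‖ = ‖f‖ := by
  have : Nonempty α := by
    by_contra h
    exact hf (ext fun x => ((not_nonempty_iff.mp h).false x).elim)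
  obtain ⟨x, -, hx⟩ :=
    isCompact_univ.exists_isMaxOn univ_nonempty (map_continuous f).norm.continuousOn
  exact ⟨x, le_antisymm (f.norm_coe_le_norm x) ((norm_le_of_nonempty f).2 fun y => hx (mem_univ y))⟩

end ContinuousMap

theorem Isometry.exists_linearIsometryEquiv_eq_sub {E F : Type*} [NormedAddCommGroup E]
    [NormedSpace ℝ E] [NormedAddCommGroup F] [NormedSpace ℝ F] {f : E → F} (hf : Isometry f)
    (hsurj : Function.Surjective f) : ∃ V : E ≃ₗᵢ[ℝ] F, ∀ x, V x = f x - f 0 := by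
  let e : E ≃ᵢ F := ⟨Equiv.ofBijective f ⟨hf.injective, hsurj⟩, hf⟩
  refine ⟨e.toRealAffineIsometryEquiv.linearIsometryEquiv, fun x => ?_⟩
  have := e.toRealAffineIsometryEquiv.map_vsub x 0
  simp only [vsub_eq_sub, sub_zero] at this
  exact this

theorem LinearIsometry.exists_extend_topologicalClosure_s13 {𝕜 E F : Type*} [NontriviallyNormedField 𝕜]
    [NormedAddCommGroup E] [NormedSpace 𝕜 E] [NormedAddCommGroup F] [NormedSpace 𝕜 F]
    [CompleteSpace F] {S : Submodule 𝕜 E} (L : S →ₗᵢ[𝕜] F) :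
    ∃ L' : S.topologicalClosure →ₗᵢ[𝕜] F,
      ∀ x : S, L' (Submodule.inclusion S.le_topologicalClosure x) = L x := by
  let ι : S →ₗᵢ[𝕜] S.topologicalClosure :=
    ⟨Submodule.inclusion S.le_topologicalClosure, fun _ => rfl⟩
  have hdense : DenseRange ι :=
    (denseRange_inclusion_iff S.le_topologicalClosure).2 S.topologicalClosure_coe.le
  let L' := L.toContinuousLinearMap.extend ι.toContinuousLinearMap
  have hL' : ∀ x, L' (ι x) = L x :=
    L.toContinuousLinearMap.extend_eq hdense ι.isometry.isUniformInducing
  refine ⟨⟨L'.toLinearMap, fun y => ?_⟩, hL'⟩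
  refine hdense.induction_on y (isClosed_eq L'.continuous.norm continuous_norm) fun x => ?_
  simp [hL']

theorem exists_linearIsometry_topologicalClosure_eq_sub {E F : Type*} [NormedAddCommGroup E]
    [NormedSpace ℝ E] [NormedAddCommGroup F] [NormedSpace ℝ F] [CompleteSpace F]
    {A : Submodule ℝ E} {B : Submodule ℝ F} {T : E → F} (hmap : ∀ f ∈ A, T f ∈ B)
    (hsurj : ∀ g ∈ B, ∃ f ∈ A, T f = g) (hiso : ∀ f ∈ A, ∀ g ∈ A, ‖T f - T g‖ = ‖f - g‖) :
    ∃ G : A.topologicalClosure →ₗᵢ[ℝ] F,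
      ∀ f (hf : f ∈ A), G ⟨f, A.le_topologicalClosure hf⟩ = T f - T 0 := by
  let T' : A → B := fun f => ⟨T f, hmap f f.2⟩
  have hT'_iso : Isometry T' := Isometry.of_dist_eq fun f g => by
    rw [Subtype.dist_eq, Subtype.dist_eq, dist_eq_norm, dist_eq_norm]
    exact hiso f f.2 g g.2
  have hT'_surj : Function.Surjective T' := fun g =>
    let ⟨f, hf, hfg⟩ := hsurj g g.2
    ⟨⟨f, hf⟩, Subtype.ext hfg⟩
  obtain ⟨L, hL⟩ := hT'_iso.exists_linearIsometryEquiv_eq_sub hT'_surj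
  obtain ⟨G, hG⟩ := (B.subtypeₗᵢ.comp L.toLinearIsometry).exists_extend_topologicalClosure_s13
  refine ⟨G, fun f hf => (hG ⟨f, hf⟩).trans ?_⟩
  simp [hL, T']

theorem exists_linearIsometryEquiv_of_map_const {X Y E F : Type*} [TopologicalSpace X]
    [CompactSpace X] [Nonempty X] [TopologicalSpace Y] [CompactSpace Y] [NormedAddCommGroup E]
    [NormedSpace ℝ E] [Nontrivial E] [NormedAddCommGroup F] [NormedSpace ℝ F]
    (T : C(X, E) → C(Y, F))
    (hiso : ∀ u u', ‖T (.const X u) - T (.const X u')‖ = ‖ContinuousMap.const X u - .const X u'‖)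
    (hTconst : ∀ u, ∃ v, T (.const X u) = .const Y v)
    (hTconst' : ∀ v, ∃ u, T (.const X u) = .const Y v) :
    ∃ V : E ≃ₗᵢ[ℝ] F, ∀ u, T (.const X u) - T 0 = .const Y (V u) := by
  have : Nonempty Y := by
    obtain ⟨u, hu⟩ := exists_norm_eq E zero_le_one
    by_contra hY
    have hT := hiso u 0
    change _ = ‖ContinuousMap.const X (u - 0)‖ at hT
    rw [show T _ - T _ = 0 from ContinuousMap.ext fun y => (not_nonempty_iff.1 hY).elim y,
      sub_zero, ContinuousMap.norm_const_eq, hu, norm_zero] at hT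
    exact zero_ne_one hT
  choose s hs using hTconst
  have hs_iso : Isometry s := Isometry.of_dist_eq fun u u' => by
    have := hiso u u'
    rw [hs, hs] at this
    change ‖ContinuousMap.const Y (s u - s u')‖ = ‖ContinuousMap.const X (u - u')‖ at this
    rwa [ContinuousMap.norm_const_eq, ContinuousMap.norm_const_eq, ← dist_eq_norm,
      ← dist_eq_norm] at this
  have hs_surj : Function.Surjective s := fun v => (hTconst' v).imp fun u hu => by
    simpa using ContinuousMap.congr_fun ((hs u).symm.trans hu) (Classical.arbitrary Y)
  obtain ⟨V, hV⟩ := hs_iso.exists_linearIsometryEquiv_eq_sub hs_surj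
  refine ⟨V, fun u => ?_⟩
  rw [← ContinuousMap.const_zero, hs, hs]
  ext
  simp [hV]

section StrongBoundaryPoints

variable {X E : Type*} [TopologicalSpace X] [CompactSpace X] [NormedAddCommGroup E]
  [NormedSpace ℝ E] [Nontrivial E] {S : Set C(X, E)}

theorem eq_of_mem_strongBoundaryPoints [T1Space X] {x x' : X} (hx : x ∈ strongBoundaryPoints S)
    (h : ∀ f ∈ S, f x = f x') : x = x' := by
  by_contra hne
  obtain ⟨u, hu⟩ := exists_norm_eq E zero_le_one
  obtain ⟨f, hfS, -, hfx, hf⟩ :=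
    hx {x'}ᶜ (isOpen_compl_singleton.mem_nhds hne) (1 / 2) one_half_pos u hu
  have := hf x' (by simp)
  rw [← h f hfS, hfx, hu] at this
  norm_num at this

theorem continuous_of_forall_mem_strongBoundaryPoints {Z : Type*} [TopologicalSpace Z]
    {Φ : Z → X} (hΦ : ∀ z, Φ z ∈ strongBoundaryPoints S)
    (hS : ∀ f ∈ S, Continuous fun z => ‖f (Φ z)‖) : Continuous Φ := by
  refine continuous_iff_continuousAt.2 fun z₀ W hW => ?_
  obtain ⟨u, hu⟩ := exists_norm_eq E zero_le_one
  obtain ⟨f, hfS, -, hfx, hf⟩ := hΦ z₀ W hW (1 / 2) one_half_pos u hu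
  have hnear : ∀ᶠ z in nhds z₀, 1 / 2 < ‖f (Φ z)‖ :=
    (hS f hfS).continuousAt.eventually (lt_mem_nhds (by norm_num [hfx, hu]))
  refine Filter.mem_map.2 (hnear.mono fun z hz => ?_)
  by_contra hzW
  exact (hf _ hzW).not_gt hz

end StrongBoundaryPoints

theorem eq_of_norm_le_of_half_smul_add_eq {F : Type*} [NormedAddCommGroup F] [NormedSpace ℝ F]
    [StrictConvexSpace ℝ F] {a b c : F} {r : ℝ} (ha : ‖a‖ ≤ r) (hb : ‖b‖ ≤ r) (hc : ‖c‖ = r)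
    (h : (1 / 2 : ℝ) • (a + b) = c) : a = c ∧ b = c := by
  have hab : a = b := by
    by_contra hne
    have := norm_combo_lt_of_ne ha hb hne one_half_pos one_half_pos (by norm_num)
    rw [← smul_add, h, hc] at this
    exact this.false
  subst hab
  refine ⟨?_, ?_⟩ <;> rw [← h] <;> module

section IsometryOfFunctionSpaces

variable {X Y E F : Type*} [TopologicalSpace X] [CompactSpace X] [TopologicalSpace Y]
  [CompactSpace Y] [NormedAddCommGroup E] [NormedSpace ℝ E] [NormedAddCommGroup F]
  [NormedSpace ℝ F] {K : Submodule ℝ C(X, E)} {G : K →ₗᵢ[ℝ] C(Y, F)}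
  {V : E →ₗᵢ[ℝ] F} {x : X} {y : Y} {u₀ : E}

theorem exists_apply_eq_of_norm_le_one_of_apply_eq [StrictConvexSpace ℝ F]
    (hK : ∀ u, ContinuousMap.const X u ∈ K)
    (hGV : ∀ u, G ⟨_, hK u⟩ = ContinuousMap.const Y (V u)) (hu₀ : ‖u₀‖ = 1) :
    ∃ y, ∀ q : K, ‖q‖ ≤ 1 → (q : C(X, E)) x = u₀ → G q y = V u₀ := by
  have : Nonempty X := ⟨x⟩
  let P : Set K := {q | ‖q‖ ≤ 1 ∧ (q : C(X, E)) x = u₀}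
  let c : K := ⟨_, hK u₀⟩
  have hcP : c ∈ P := ⟨((ContinuousMap.norm_const_eq u₀).trans hu₀).le, rfl⟩
  have hPnorm : ∀ q ∈ P, ‖q‖ = 1 := fun q hq =>
    le_antisymm hq.1 (hu₀ ▸ hq.2 ▸ ContinuousMap.norm_coe_le_norm (q : C(X, E)) x)
  have hmid : ∀ q ∈ P, ∀ q' ∈ P, (1 / 2 : ℝ) • (q + q') ∈ P := by
    intro q hq q' hq'
    refine ⟨?_, ?_⟩
    · calc ‖(1 / 2 : ℝ) • (q + q')‖ ≤ (1 / 2 : ℝ) * (‖q‖ + ‖q'‖) := by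
            rw [norm_smul, Real.norm_of_nonneg one_half_pos.le]
            gcongr
            exact norm_add_le q q'
        _ ≤ 1 := by linarith [hq.1, hq'.1]
    · change (1 / 2 : ℝ) • ((q : C(X, E)) x + (q' : C(X, E)) x) = u₀
      rw [hq.2, hq'.2]
      module
  have hGmid : ∀ (q q' : K) y,
      G ((1 / 2 : ℝ) • (q + q')) y = (1 / 2 : ℝ) • (G q y + G q' y) := by
    simp
  have hGle : ∀ q ∈ P, ∀ y, ‖G q y‖ ≤ 1 := fun q hq y =>
    ((G q).norm_coe_le_norm y).trans ((G.norm_map q).trans_le hq.1)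
  have hVu₀ : ‖V u₀‖ = 1 := by rw [V.norm_map, hu₀]
  let M : P → Set Y := fun q => {y | G q y = V u₀}
  have hM : ∀ q, (M q).Nonempty := by
    rintro ⟨q, hq⟩
    let m := (1 / 2 : ℝ) • (q + c)
    have hm : ‖G m‖ = 1 := (G.norm_map m).trans (hPnorm m (hmid q hq c hcP))
    obtain ⟨y, hy⟩ := (G m).exists_norm_apply_eq_norm fun h => by simp [h] at hm
    have hGc : G c y = V u₀ := by simp [c, hGV]
    obtain ⟨hq, hc⟩ := eq_of_norm_le_of_half_smul_add_eq (hGle q hq y) (hGle c hcP y)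
      (hy.trans hm) (hGmid q c y).symm
    exact ⟨y, hq.trans (hc.symm.trans hGc)⟩
  have hdir : Directed (· ⊇ ·) M := by
    rintro ⟨q, hq⟩ ⟨q', hq'⟩
    refine ⟨⟨_, hmid q hq q' hq'⟩, ?_⟩
    have hsub : ∀ y, G ((1 / 2 : ℝ) • (q + q')) y = V u₀ → G q y = V u₀ ∧ G q' y = V u₀ :=
      fun y hy => eq_of_norm_le_of_half_smul_add_eq (hGle q hq y) (hGle q' hq' y) hVu₀
        ((hGmid q q' y).symm.trans hy)
    exact ⟨fun y hy => (hsub y hy).1, fun y hy => (hsub y hy).2⟩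
  have hMclosed : ∀ q, IsClosed (M q) := fun q => isClosed_eq (map_continuous _) continuous_const
  have : Nonempty P := ⟨⟨c, hcP⟩⟩
  obtain ⟨y, hy⟩ := IsCompact.nonempty_iInter_of_directed_nonempty_isCompact_isClosed M hdir hM
    (fun q => (hMclosed q).isCompact) hMclosed
  exact ⟨y, fun q hq hqx => mem_iInter.1 hy ⟨q, hq, hqx⟩⟩

theorem norm_add_apply_le_one (hx : x ∈ strongBoundaryPoints (K : Set C(X, E)))
    (hu₀ : ‖u₀‖ = 1) (hy : ∀ q : K, ‖q‖ ≤ 1 → (q : C(X, E)) x = u₀ → G q y = V u₀) {k : K}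
    (hk : ‖k‖ ≤ 1) (hkx : (k : C(X, E)) x = 0) : ‖V u₀ + G k y‖ ≤ 1 := by
  refine le_of_forall_pos_le_add fun ε hε => ?_
  have hU : {z | ‖(k : C(X, E)) z‖ < ε} ∈ nhds x :=
    (isOpen_lt (map_continuous _).norm continuous_const).mem_nhds (by simpa [hkx])
  obtain ⟨h, hhK, hh, hhx, hsmall⟩ := hx _ hU ε hε u₀ hu₀
  let p : K := ⟨h, hhK⟩
  -- `h` is at most `1` everywhere and below `ε` where `k` is not
  have hpk : ‖p + k‖ ≤ 1 + ε := by
    refine ((p + k : K) : C(X, E)).norm_le (by positivity) |>.2 fun z => ?_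
    have hhz : ‖h z‖ ≤ 1 := hh ▸ h.norm_coe_le_norm z
    have hkz : ‖(k : C(X, E)) z‖ ≤ 1 := ((k : C(X, E)).norm_coe_le_norm z).trans hk
    refine (norm_add_le (h z) ((k : C(X, E)) z)).trans ?_
    by_cases hz : ‖(k : C(X, E)) z‖ < ε
    · linarith
    · linarith [hsmall z hz]
  calc ‖V u₀ + G k y‖ = ‖G (p + k) y‖ := by rw [map_add, ContinuousMap.add_apply, hy p hh.le hhx]
    _ ≤ ‖G (p + k)‖ := (G (p + k)).norm_coe_le_norm y
    _ = ‖p + k‖ := G.norm_map _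
    _ ≤ 1 + ε := hpk

theorem apply_eq_zero_of_apply_eq_zero [StrictConvexSpace ℝ F]
    (hx : x ∈ strongBoundaryPoints (K : Set C(X, E))) (hu₀ : ‖u₀‖ = 1)
    (hy : ∀ q : K, ‖q‖ ≤ 1 → (q : C(X, E)) x = u₀ → G q y = V u₀) {k : K}
    (hkx : (k : C(X, E)) x = 0) : G k y = 0 := by
  set t : ℝ := (‖k‖ + 1)⁻¹
  have ht : 0 < t := by positivity
  have htk : ‖t • k‖ ≤ 1 := by
    rw [norm_smul, Real.norm_of_nonneg ht.le, inv_mul_le_one₀ (by positivity)]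
    linarith
  have htkx : ((t • k : K) : C(X, E)) x = 0 := by simp [hkx]
  have hadd := norm_add_apply_le_one hx hu₀ hy htk htkx
  have hsub := norm_add_apply_le_one hx hu₀ hy (k := -(t • k)) (by rwa [norm_neg]) (by simp [hkx])
  rw [map_neg, ContinuousMap.neg_apply, ← sub_eq_add_neg] at hsub
  have hVu₀ : ‖V u₀‖ = 1 := by rw [V.norm_map, hu₀]
  have := (eq_of_norm_le_of_half_smul_add_eq hadd hsub hVu₀ (by module)).1
  simpa [ht.ne'] using this

theorem exists_apply_eq_apply_eval [Nontrivial E] [StrictConvexSpace ℝ F]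
    (hK : ∀ u, ContinuousMap.const X u ∈ K)
    (hGV : ∀ u, G ⟨_, hK u⟩ = ContinuousMap.const Y (V u))
    (hx : x ∈ strongBoundaryPoints (K : Set C(X, E))) :
    ∃ y, ∀ k : K, G k y = V ((k : C(X, E)) x) := by
  obtain ⟨u₀, hu₀⟩ := exists_norm_eq E zero_le_one
  obtain ⟨y, hy⟩ := exists_apply_eq_of_norm_le_one_of_apply_eq (x := x) hK hGV hu₀
  refine ⟨y, fun k => ?_⟩
  let c : K := ⟨_, hK ((k : C(X, E)) x)⟩
  have h₀ := apply_eq_zero_of_apply_eq_zero hx hu₀ hy (k := k - c) (by simp [c])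
  rwa [map_sub, ContinuousMap.sub_apply, sub_eq_zero, hGV, ContinuousMap.const_apply] at h₀

theorem exists_continuous_surjOn_strongBoundaryPoints [Nontrivial E] [T1Space X]
    [StrictConvexSpace ℝ F] (hK : ∀ u, ContinuousMap.const X u ∈ K)
    (hGV : ∀ u, G ⟨_, hK u⟩ = ContinuousMap.const Y (V u)) :
    ∃ (Y₀ : Set Y) (Φ : Y₀ → X), Continuous Φ ∧
      (∀ y, Φ y ∈ strongBoundaryPoints (K : Set C(X, E))) ∧
      (∀ x ∈ strongBoundaryPoints (K : Set C(X, E)), ∃ y, Φ y = x) ∧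
      ∀ (y : Y₀) (k : K), G k y = V ((k : C(X, E)) (Φ y)) := by
  let Y₀ : Set Y :=
    {y | ∃ x ∈ strongBoundaryPoints (K : Set C(X, E)), ∀ k : K, G k y = V ((k : C(X, E)) x)}
  choose Φ hΦΘ hΦ using fun y : Y₀ => y.2
  refine ⟨Y₀, Φ, ?_, hΦΘ, fun x hx => ?_, hΦ⟩
  · refine continuous_of_forall_mem_strongBoundaryPoints hΦΘ fun f hf => ?_
    simp_rw [← V.norm_map, ← hΦ _ ⟨f, hf⟩]
    exact ((map_continuous (G ⟨f, hf⟩)).comp continuous_subtype_val).norm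
  · obtain ⟨y, hy⟩ := exists_apply_eq_apply_eval hK hGV hx
    refine ⟨⟨y, x, hx, hy⟩, (eq_of_mem_strongBoundaryPoints hx fun f hf => ?_).symm⟩
    exact V.injective ((hy ⟨f, hf⟩).symm.trans (hΦ ⟨y, x, hx, hy⟩ ⟨f, hf⟩))

end IsometryOfFunctionSpaces

theorem stmt13_general [Nonempty X] [Nontrivial E] [StrictConvexSpace ℝ F]
    (A : Subspace 𝕂 C(X, E)) (B : Subspace 𝕂 C(Y, F))
    (hconstA : ∀ u : E, ContinuousMap.const X u ∈ A)
    (T : C(X, E) → C(Y, F))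
    (hmap : ∀ f ∈ A, T f ∈ B)
    (hsurj : ∀ g ∈ B, ∃ f ∈ A, T f = g)
    (hiso : ∀ f ∈ A, ∀ g ∈ A, ‖T f - T g‖ = ‖f - g‖)
    (hTconst : ∀ u : E, ∃ v : F, T (ContinuousMap.const X u) = ContinuousMap.const Y v)
    (hTconst' : ∀ v : F, ∃ u : E, T (ContinuousMap.const X u) = ContinuousMap.const Y v) :
    ∃ (Y₀ : Set Y) (Φ : Y₀ → X) (V : E →ₗᵢ[ℝ] F),
      Function.Surjective V ∧
      Continuous Φ ∧
      (∀ y : Y₀, Φ y ∈ strongBoundaryPoints (closure (A : Set C(X, E)))) ∧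
      (∀ x ∈ strongBoundaryPoints (closure (A : Set C(X, E))), ∃ y : Y₀, Φ y = x) ∧
      (∀ f ∈ A, ∀ y : Y₀, T f (y : Y) = T 0 (y : Y) + V (f (Φ y))) := by
  obtain ⟨V, hV⟩ := exists_linearIsometryEquiv_of_map_const T
    (fun u u' => hiso _ (hconstA u) _ (hconstA u')) hTconst hTconst'
  obtain ⟨G, hGT⟩ := exists_linearIsometry_topologicalClosure_eq_sub
    (A := A.restrictScalars ℝ) (B := B.restrictScalars ℝ) hmap hsurj hiso
  obtain ⟨Y₀, Φ, hΦ, hΦΘ, hΦsurj, hrep⟩ :=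
    exists_continuous_surjOn_strongBoundaryPoints (G := G) (V := V.toLinearIsometry) _
      fun u => (hGT _ (hconstA u)).trans (hV u)
  rw [Submodule.topologicalClosure_coe] at hΦΘ hΦsurj
  refine ⟨Y₀, Φ, V.toLinearIsometry, V.surjective, hΦ, hΦΘ, hΦsurj, fun f hf y => ?_⟩
  rw [← sub_eq_iff_eq_add', ← ContinuousMap.sub_apply, ← hGT f hf, hrep]

/-- If `A` and `B` contain the constant functions and the surjective isometry `T`
maps the constant functions in `A` onto the constant functions in `B`, then the
representation holds with a single surjective real-linear isometry `V : E → F`. -/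
theorem stmt13 [Nonempty X] [Nontrivial E] [StrictConvexSpace ℝ F]
    (A : Subspace 𝕂 C(X, E)) (B : Subspace 𝕂 C(Y, F))
    (hconstA : ∀ u : E, ContinuousMap.const X u ∈ A)
    (hconstB : ∀ v : F, ContinuousMap.const Y v ∈ B)
    (T : C(X, E) → C(Y, F))
    (hmap : ∀ f ∈ A, T f ∈ B)
    (hsurj : ∀ g ∈ B, ∃ f ∈ A, T f = g)
    (hiso : ∀ f ∈ A, ∀ g ∈ A, ‖T f - T g‖ = ‖f - g‖)
    (hTconst : ∀ u : E, ∃ v : F, T (ContinuousMap.const X u) = ContinuousMap.const Y v)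
    (hTconst' : ∀ v : F, ∃ u : E, T (ContinuousMap.const X u) = ContinuousMap.const Y v) :
    ∃ (Y₀ : Set Y) (Φ : Y₀ → X) (V : E →ₗᵢ[ℝ] F),
      Function.Surjective V ∧
      Continuous Φ ∧
      (∀ y : Y₀, Φ y ∈ strongBoundaryPoints (closure (A : Set C(X, E)))) ∧
      (∀ x ∈ strongBoundaryPoints (closure (A : Set C(X, E))), ∃ y : Y₀, Φ y = x) ∧
      (∀ f ∈ A, ∀ y : Y₀, T f (y : Y) = T 0 (y : Y) + V (f (Φ y))) :=
  stmt13_general A B hconstA T hmap hsurj hiso hTconst hTconst'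
end

section
/- Let X, Y be compact Hausdorff spaces, E, F Banach spaces over 𝕂 ∈ {ℝ, ℂ}, A and B 𝕂-linear subspaces of C(X,E) and C(Y,F), respectively, and T : A → B a surjective real-linear isometry. Suppose that Θ(A) = X and that S(F) contains a point v such that {v} is a maximal convex subset of S(F). Then Θ(B) ⊆ Y₀, where Y₀ = ⋃_{x ∈ Θ(A)} H_x. -/
open Set Metric

variable {𝕂 : Type*} [RCLike 𝕂]
variable {X : Type*} [TopologicalSpace X] [CompactSpace X] [T2Space X]
variable {Y : Type*} [TopologicalSpace Y] [CompactSpace Y] [T2Space Y]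
variable {E : Type*} [NormedAddCommGroup E] [NormedSpace ℝ E] [NormedSpace 𝕂 E]
  [IsScalarTower ℝ 𝕂 E] [CompleteSpace E]
variable {F : Type*} [NormedAddCommGroup F] [NormedSpace ℝ F] [NormedSpace 𝕂 F]
  [IsScalarTower ℝ 𝕂 F] [CompleteSpace F]

/-- If `Θ(A) = X`, the unit sphere of `F` has a singleton maximal convex subset
`{v}`, and `T : A → B` is a surjective real-linear isometry, then
`Θ(B) ⊆ Y₀ = ⋃_{x ∈ Θ(A)} H_x`. -/
theorem stmt14 (A : Subspace 𝕂 C(X, E)) (B : Subspace 𝕂 C(Y, F))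
    (T : C(X, E) → C(Y, F))
    (hmap : ∀ f ∈ A, T f ∈ B)
    (hsurj : ∀ g ∈ B, ∃ f ∈ A, T f = g)
    (hadd : ∀ f ∈ A, ∀ g ∈ A, T (f + g) = T f + T g)
    (hsmul : ∀ r : ℝ, ∀ f ∈ A, T (r • f) = r • T f)
    (hiso : ∀ f ∈ A, ∀ g ∈ A, ‖T f - T g‖ = ‖f - g‖)
    (hΘA : strongBoundaryPoints (A : Set C(X, E)) = Set.univ)
    (v : F) (hv : MaxConvexIn (sphere (0 : F) 1) {v}) :
    strongBoundaryPoints (B : Set C(Y, F)) ⊆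
      ⋃ x ∈ strongBoundaryPoints (A : Set C(X, E)), Hset T A B x := by
  intro y hy
  simp only [strongBoundaryPoints, Set.mem_setOf_eq] at hy
  -- basic facts about T
  have hT0 : T 0 = 0 := by
    have h := hsmul 0 0 (Submodule.zero_mem A)
    simpa using h
  have hnorm : ∀ f ∈ A, ‖T f‖ = ‖f‖ := by
    intro f hf
    have h := hiso f hf 0 (Submodule.zero_mem A)
    rwa [hT0, sub_zero, sub_zero] at h
  have hv1 : ‖v‖ = 1 := by
    have := hv.1 (Set.mem_singleton v)
    rwa [mem_sphere_zero_iff_norm] at this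
  -- an element of M = V^B_{y,{v}}
  obtain ⟨f₀', hf₀'B, hf₀'n, hf₀'y, -⟩ := hy Set.univ Filter.univ_mem 1 one_pos v hv1
  obtain ⟨f₀, hf₀A, hTf₀⟩ := hsurj f₀' hf₀'B
  have hf₀1 : ‖f₀‖ = 1 := by rw [← hnorm f₀ hf₀A, hTf₀]; exact hf₀'n
  -- the set C = T⁻¹(M)
  set C : Set C(X, E) := {f | f ∈ A ∧ ‖f‖ = 1 ∧ (T f) y = v} with hCdef
  have hf₀C : f₀ ∈ C := ⟨hf₀A, hf₀1, by rw [hTf₀]; exact hf₀'y⟩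
  have hCconv : Convex ℝ C := by
    rintro f ⟨hfA, hf1, hfy⟩ g ⟨hgA, hg1, hgy⟩ a b ha hb hab
    have hafA : a • f ∈ A := A.smul_of_tower_mem a hfA
    have hbgA : b • g ∈ A := A.smul_of_tower_mem b hgA
    have hTcomb : T (a • f + b • g) = a • T f + b • T g := by
      rw [hadd _ hafA _ hbgA, hsmul a f hfA, hsmul b g hgA]
    have hmemA : a • f + b • g ∈ A := A.add_mem hafA hbgA
    have hval : (T (a • f + b • g)) y = v := by
      rw [hTcomb]
      simp only [ContinuousMap.add_apply, ContinuousMap.smul_apply, hfy, hgy]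
      rw [← add_smul, hab, one_smul]
    refine ⟨hmemA, ?_, hval⟩
    have hle : ‖a • f + b • g‖ ≤ 1 := by
      calc ‖a • f + b • g‖ ≤ ‖a • f‖ + ‖b • g‖ := norm_add_le _ _
        _ = a * ‖f‖ + b * ‖g‖ := by
            rw [norm_smul, norm_smul, Real.norm_of_nonneg ha, Real.norm_of_nonneg hb]
        _ = 1 := by rw [hf1, hg1]; linarith
    have hge : 1 ≤ ‖a • f + b • g‖ := by
      have h1 : ‖(T (a • f + b • g)) y‖ ≤ ‖T (a • f + b • g)‖ :=
        ContinuousMap.norm_coe_le_norm _ y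
      rw [hval, hv1, hnorm _ hmemA] at h1
      exact h1
    linarith
  -- X is nonempty
  have hXne : Nonempty X := by
    by_contra hne
    rw [not_nonempty_iff] at hne
    have : f₀ = 0 := ContinuousMap.ext fun x => isEmptyElim x
    rw [this, norm_zero] at hf₀1
    norm_num at hf₀1
  -- norm attainment for elements of C
  have hattain : ∀ f ∈ C, ∃ x : X, ‖f x‖ = 1 := by
    rintro f ⟨-, hf1, -⟩
    obtain ⟨x, -, hx⟩ := (isCompact_univ (X := X)).exists_isMaxOn
      (Set.univ_nonempty) (f.continuous.norm.continuousOn)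
    refine ⟨x, le_antisymm (hf1 ▸ ContinuousMap.norm_coe_le_norm f x) ?_⟩
    rw [← hf1]
    refine (ContinuousMap.norm_le f (norm_nonneg _)).mpr ?_
    intro z
    exact hx (Set.mem_univ z)
  -- there is a common point where all members of C have norm one
  obtain ⟨x, -, hx0⟩ := (isCompact_univ (X := X)).inter_iInter_nonempty
      (fun f : ↥C => {x : X | ‖(f : C(X, E)) x‖ = 1})
      (fun f => isClosed_eq ((f : C(X, E)).continuous.norm) continuous_const)
      (by
        intro t
        rcases t.eq_empty_or_nonempty with rfl | htne
        · simpa using (Set.univ_nonempty : (Set.univ : Set X).Nonempty)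
        have hcard : (0 : ℝ) < (t.card : ℝ) := by
          exact_mod_cast Finset.card_pos.mpr htne
        set w : ℝ := (t.card : ℝ)⁻¹ with hw
        have hwpos : 0 < w := inv_pos.mpr hcard
        set g : C(X, E) := ∑ i ∈ t, w • (i : C(X, E)) with hg
        have hgC : g ∈ C := by
          refine hCconv.sum_mem (fun i _ => le_of_lt hwpos) ?_ (fun i _ => i.2)
          rw [Finset.sum_const, nsmul_eq_mul, mul_inv_cancel₀ (ne_of_gt hcard)]
        obtain ⟨x, hxg⟩ := hattain g hgC
        refine ⟨x, Set.mem_univ x, ?_⟩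
        simp only [Set.mem_iInter, Set.mem_setOf_eq]
        intro i hi
        by_contra hlt'
        have hle1 : ∀ j : ↥C, ‖(j : C(X, E)) x‖ ≤ 1 := fun j =>
          j.2.2.1 ▸ ContinuousMap.norm_coe_le_norm _ x
        have hlt : ‖(i : C(X, E)) x‖ < 1 := lt_of_le_of_ne (hle1 i) hlt'
        have hgx : g x = ∑ j ∈ t, w • ((j : C(X, E)) x) := by
          rw [hg]
          simp [ContinuousMap.coe_sum, Finset.sum_apply]
        have hcontr : ‖g x‖ < 1 := by
          calc ‖g x‖ ≤ ∑ j ∈ t, ‖w • ((j : C(X, E)) x)‖ := by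
                rw [hgx]; exact norm_sum_le _ _
            _ < ∑ _j ∈ t, w := by
                refine Finset.sum_lt_sum (fun j hj => ?_) ⟨i, hi, ?_⟩
                · rw [norm_smul, Real.norm_of_nonneg (le_of_lt hwpos)]
                  exact mul_le_of_le_one_right (le_of_lt hwpos) (hle1 j)
                · rw [norm_smul, Real.norm_of_nonneg (le_of_lt hwpos)]
                  exact mul_lt_of_lt_one_right hwpos hlt
            _ = 1 := by rw [Finset.sum_const, nsmul_eq_mul, mul_inv_cancel₀ (ne_of_gt hcard)]
        rw [hxg] at hcontr
        norm_num at hcontr)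
  have hx : ∀ f ∈ C, ‖f x‖ = 1 := by
    intro f hf
    have := Set.mem_iInter.mp hx0 ⟨f, hf⟩
    exact this
  set u : E := f₀ x with hu'
  have hu : ‖u‖ = 1 := hx f₀ hf₀C
  -- Lemma A: elements whose sum with every element of M has norm 2 have unit norm at y
  have lemA : ∀ g : C(Y, F), ‖g‖ = 1 →
      (∀ f₁ : C(Y, F), f₁ ∈ B → ‖f₁‖ = 1 → f₁ y = v → ‖g + f₁‖ = 2) → ‖g y‖ = 1 := by
    intro g hg1 hmid
    by_contra hne
    have hlt : ‖g y‖ < 1 :=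
      lt_of_le_of_ne (hg1 ▸ ContinuousMap.norm_coe_le_norm g y) hne
    set δ : ℝ := 1 - ‖g y‖ with hδ
    have hδpos : 0 < δ := by simp only [hδ]; linarith
    have hδle : δ ≤ 1 := by have := norm_nonneg (g y); simp only [hδ]; linarith
    set U : Set Y := {z | ‖g z‖ < 1 - δ / 2} with hU
    have hUopen : IsOpen U := isOpen_lt g.continuous.norm continuous_const
    have hyU : y ∈ U := by simp only [hU, Set.mem_setOf_eq]; linarith
    obtain ⟨f₁, hf₁B, hf₁n, hf₁y, hsmall⟩ :=
      hy U (hUopen.mem_nhds hyU) (δ / 2) (by linarith) v hv1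
    have hbound : ∀ z, ‖(g + f₁) z‖ ≤ 2 - δ / 2 := by
      intro z
      rw [ContinuousMap.add_apply]
      by_cases hz : z ∈ U
      · have h1 : ‖g z‖ < 1 - δ / 2 := hz
        have h2 : ‖f₁ z‖ ≤ 1 := hf₁n ▸ ContinuousMap.norm_coe_le_norm f₁ z
        calc ‖g z + f₁ z‖ ≤ ‖g z‖ + ‖f₁ z‖ := norm_add_le _ _
          _ ≤ 2 - δ / 2 := by linarith
      · have h1 : ‖g z‖ ≤ 1 := hg1 ▸ ContinuousMap.norm_coe_le_norm g z
        have h2 : ‖f₁ z‖ < δ / 2 := hsmall z hz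
        calc ‖g z + f₁ z‖ ≤ ‖g z‖ + ‖f₁ z‖ := norm_add_le _ _
          _ ≤ 2 - δ / 2 := by linarith
    have hle2 : ‖g + f₁‖ ≤ 2 - δ / 2 :=
      (ContinuousMap.norm_le _ (by linarith)).mpr hbound
    have heq2 := hmid f₁ hf₁B hf₁n hf₁y
    linarith
  -- the key step
  have key : ∀ h : C(X, E), h ∈ A → ‖h‖ = 1 → h x = u → (T h) y = v := by
    intro h hhA hh1 hhx
    have hseg : segment ℝ v ((T h) y) ⊆ sphere (0 : F) 1 := by
      rintro z ⟨a, b, ha, hb, hab, rfl⟩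
      rw [mem_sphere_zero_iff_norm]
      set q : C(X, E) := a • f₀ + b • h with hq
      have hafA : a • f₀ ∈ A := A.smul_of_tower_mem a hf₀A
      have hbhA : b • h ∈ A := A.smul_of_tower_mem b hhA
      have hqA : q ∈ A := A.add_mem hafA hbhA
      have hqx : q x = u := by
        simp only [hq, ContinuousMap.add_apply, ContinuousMap.smul_apply, ← hu', hhx]
        rw [← add_smul, hab, one_smul]
      have hq1 : ‖q‖ = 1 := by
        have hle : ‖q‖ ≤ 1 := by
          calc ‖q‖ ≤ ‖a • f₀‖ + ‖b • h‖ := norm_add_le _ _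
            _ = a * ‖f₀‖ + b * ‖h‖ := by
                rw [norm_smul, norm_smul, Real.norm_of_nonneg ha, Real.norm_of_nonneg hb]
            _ = 1 := by rw [hf₀1, hh1]; linarith
        have hge : 1 ≤ ‖q‖ := by
          have := ContinuousMap.norm_coe_le_norm q x
          rw [hqx, hu] at this
          exact this
        linarith
      have hTq : T q = a • T f₀ + b • T h := by
        rw [hq, hadd _ hafA _ hbhA, hsmul a f₀ hf₀A, hsmul b h hhA]
      have hTqy : (T q) y = a • v + b • ((T h) y) := by
        rw [hTq]
        simp only [ContinuousMap.add_apply, ContinuousMap.smul_apply, hTf₀, hf₀'y]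
      have hTqnorm : ‖T q‖ = 1 := by rw [hnorm q hqA, hq1]
      have hmid : ∀ f₁ : C(Y, F), f₁ ∈ B → ‖f₁‖ = 1 → f₁ y = v → ‖T q + f₁‖ = 2 := by
        intro f₁ hf₁B hf₁n hf₁y
        obtain ⟨p, hpA, hTp⟩ := hsurj f₁ hf₁B
        have hp1 : ‖p‖ = 1 := by rw [← hnorm p hpA, hTp]; exact hf₁n
        have hpC : p ∈ C := ⟨hpA, hp1, by rw [hTp]; exact hf₁y⟩
        have hmidC : (1 / 2 : ℝ) • f₀ + (1 / 2 : ℝ) • p ∈ C :=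
          hCconv hf₀C hpC (by norm_num) (by norm_num) (by norm_num)
        have h2 : ‖u + p x‖ = 2 := by
          have hval := hx _ hmidC
          simp only [ContinuousMap.add_apply, ContinuousMap.smul_apply, ← hu'] at hval
          rw [← smul_add, norm_smul] at hval
          simp only [Real.norm_eq_abs] at hval
          rw [abs_of_nonneg (by norm_num : (0:ℝ) ≤ 1/2)] at hval
          linarith
        have hsum : T q + f₁ = T (q + p) := by
          rw [hadd q hqA p hpA, hTp]
        rw [hsum, hnorm _ (A.add_mem hqA hpA)]
        have hle : ‖q + p‖ ≤ 2 := by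
          calc ‖q + p‖ ≤ ‖q‖ + ‖p‖ := norm_add_le _ _
            _ = 2 := by rw [hq1, hp1]; norm_num
        have hge : 2 ≤ ‖q + p‖ := by
          have h3 := ContinuousMap.norm_coe_le_norm (q + p) x
          rw [ContinuousMap.add_apply, hqx, h2] at h3
          exact h3
        linarith
      have := lemA (T q) hTqnorm hmid
      rw [hTqy] at this
      exact this
    have hsege : segment ℝ v ((T h) y) = {v} :=
      hv.2.2 _ hseg (convex_segment _ _)
        (Set.singleton_subset_iff.mpr (left_mem_segment ℝ v ((T h) y)))
    have hmem : (T h) y ∈ segment ℝ v ((T h) y) := right_mem_segment ℝ v ((T h) y)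
    rw [hsege, Set.mem_singleton_iff] at hmem
    exact hmem
  -- conclude
  refine Set.mem_iUnion₂.mpr ⟨x, ?_, ?_⟩
  · rw [hΘA]; exact Set.mem_univ x
  · refine ⟨u, hu, v, hv1, ?_⟩
    rintro g ⟨h, ⟨hhA, hh1, hhx⟩, rfl⟩
    rw [Set.mem_singleton_iff] at hhx
    exact ⟨hmap h hhA, by rw [hnorm h hhA, hh1],
      Set.mem_singleton_iff.mpr (key h hhA hh1 hhx)⟩
end

section
/- Let X, Y be compact Hausdorff spaces and E, F Banach spaces over 𝕂 ∈ {ℝ, ℂ} such that S(F) contains a point v for which {v} is a maximal convex subset of S(F). Let A be a closed 𝕂-linear subspace of C(X,E) with Θ(A) = X and B a 𝕂-linear subspace of C(Y,F) with Θ(B) = Y. Then for any surjective (not necessarily linear) isometry T : A → B there exist a continuous map Φ : Y → X and a family {V_y}_{y∈Y} of real-linear operators from E to F with ‖V_y‖ ≤ 1 for all y ∈ Y, such that Tf(y) = T0(y) + V_y(f(Φ(y))) for all f ∈ A and all y ∈ Y. -/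
open Set Metric

variable {𝕂 : Type*} [RCLike 𝕂]
variable {X : Type*} [TopologicalSpace X] [CompactSpace X] [T2Space X]
variable {Y : Type*} [TopologicalSpace Y] [CompactSpace Y] [T2Space Y]
variable {E : Type*} [NormedAddCommGroup E] [NormedSpace ℝ E] [NormedSpace 𝕂 E]
  [IsScalarTower ℝ 𝕂 E] [CompleteSpace E]
variable {F : Type*} [NormedAddCommGroup F] [NormedSpace ℝ F] [NormedSpace 𝕂 F]
  [IsScalarTower ℝ 𝕂 F] [CompleteSpace F]

/-!
By Mazur–Ulam, `L := T - T 0` is a real-linear isometry of `A` onto `B`. Fix `y ∈ Y`. Since `{v}` is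
a maximal convex subset of `S(F)` and `y` is a strong boundary point, the face
`{g ∈ S(B) | g y = v}` is a maximal convex subset of `S(B)`, so its preimage `𝒩` under `L` is a
maximal convex subset of `S(A)`. All functions of `𝒩` attain their norm at a common point, and
enlarging their values there to a maximal convex subset of `S(E)` shows that `𝒩` contains
functions peaking at some `Φ y ∈ X`. Adding such a peaking function `h` to `±g` with
`g (Φ y) = 0` gives `‖v ± L g y‖ ≤ 1`, hence `L g y = 0`, and so `‖L f y‖ ≤ ‖f (Φ y)‖` for all
`f ∈ A`. This inequality pins `Φ y` down uniquely; its set of solutions `(y, x)` is closed,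
which makes `Φ` continuous, and it makes `f (Φ y) ↦ L f y` a well-defined contraction `V y`.
-/

open Filter Topology

section NormedSpace

variable {P Q : Type*}

theorem exists_maxConvexIn_superset [AddCommGroup P] [Module ℝ P] {S C : Set P}
    (hCS : C ⊆ S) (hC : Convex ℝ C) : ∃ D, C ⊆ D ∧ MaxConvexIn S D := by
  have hchain : ∀ c ⊆ {D | D ⊆ S ∧ Convex ℝ D}, IsChain (· ⊆ ·) c → c.Nonempty →
      ∃ ub ∈ {D | D ⊆ S ∧ Convex ℝ D}, ∀ D ∈ c, D ⊆ ub := fun c hc hchain _ =>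
    ⟨⋃₀ c, ⟨sUnion_subset fun D hD => (hc hD).1,
      hchain.directedOn.convex_sUnion fun D hD => (hc hD).2⟩,
      fun _ => subset_sUnion_of_mem⟩
  obtain ⟨D, hCD, ⟨hDS, hD⟩, hmax⟩ := zorn_subset_nonempty _ hchain C ⟨hCS, hC⟩
  exact ⟨D, hCD, hDS, hD, fun D' hD'S hD' hDD' => (hmax ⟨hD'S, hD'⟩ hDD').antisymm hDD'⟩

theorem MaxConvexIn.preimage_linearEquiv [AddCommGroup P] [Module ℝ P] [AddCommGroup Q]
    [Module ℝ Q] {S C : Set Q} (h : MaxConvexIn S C) (e : P ≃ₗ[ℝ] Q) :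
    MaxConvexIn (e ⁻¹' S) (e ⁻¹' C) := by
  refine ⟨preimage_mono h.1, h.2.1.linear_preimage e.toLinearMap, fun C' hC'S hC' hCC' => ?_⟩
  have hC'C : e '' C' = C := by
    refine h.2.2 _ (image_subset_iff.2 hC'S) (hC'.linear_image e.toLinearMap) fun c hc => ?_
    exact ⟨e.symm c, hCC' (by simpa using hc), by simp⟩
  rw [← hC'C, e.injective.preimage_image]

variable [NormedAddCommGroup P] [NormedSpace ℝ P] [NormedAddCommGroup Q] [NormedSpace ℝ Q]

theorem MaxConvexIn.preimage_linearIsometryEquiv {C : Set Q} (h : MaxConvexIn (sphere 0 1) C)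
    (e : P ≃ₗᵢ[ℝ] Q) : MaxConvexIn (sphere 0 1) (e ⁻¹' C) := by
  simpa [e.preimage_sphere] using h.preimage_linearEquiv e.toLinearEquiv

theorem convex_sphere_inter_preimage {D : Set Q} (hD : Convex ℝ D) (hDS : D ⊆ sphere 0 1)
    (ℓ : P →ₗ[ℝ] Q) (hℓ : ∀ p, ‖ℓ p‖ ≤ ‖p‖) : Convex ℝ (sphere 0 1 ∩ ℓ ⁻¹' D) := by
  have : sphere (0 : P) 1 ∩ ℓ ⁻¹' D = closedBall 0 1 ∩ ℓ ⁻¹' D := by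
    refine Subset.antisymm (inter_subset_inter_left _ sphere_subset_closedBall) ?_
    rintro p ⟨hp, hpD⟩
    have hℓp : ‖ℓ p‖ = 1 := mem_sphere_zero_iff_norm.1 (hDS hpD)
    exact ⟨mem_sphere_zero_iff_norm.2 (le_antisymm (mem_closedBall_zero_iff.1 hp) (hℓp ▸ hℓ p)),
      hpD⟩
  rw [this]
  exact (convex_closedBall 0 1).inter (hD.linear_preimage ℓ)

theorem norm_eq_one_of_norm_midpoint_eq_one {a b : P} (ha : ‖a‖ ≤ 1) (hb : ‖b‖ ≤ 1)
    (h : ‖midpoint ℝ a b‖ = 1) : ‖a‖ = 1 ∧ ‖b‖ = 1 := by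
  have : ‖midpoint ℝ a b‖ ≤ (‖a‖ + ‖b‖) / 2 := by
    rw [midpoint_eq_smul_add, norm_smul, invOf_eq_inv, div_eq_inv_mul]
    gcongr
    · simp
    · exact norm_add_le a b
  constructor <;> linarith

/-- Points `v ± w` of the unit ball span a segment through `v` lying in the unit sphere,
which the maximality of `{v}` collapses. -/
theorem MaxConvexIn.eq_zero_of_norm_add_le_of_norm_sub_le {v w : P}
    (hv : MaxConvexIn (sphere 0 1) {v}) (hadd : ‖v + w‖ ≤ 1) (hsub : ‖v - w‖ ≤ 1) : w = 0 := by
  have hv1 : ‖v‖ = 1 := mem_sphere_zero_iff_norm.1 (hv.1 rfl)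
  have hball : segment ℝ (v + w) (v - w) ⊆ closedBall 0 1 :=
    (convex_closedBall 0 1).segment_subset (mem_closedBall_zero_iff.2 hadd)
      (mem_closedBall_zero_iff.2 hsub)
  have hsphere : segment ℝ (v + w) (v - w) ⊆ sphere 0 1 := by
    rintro p ⟨a, b, ha, hb, hab, rfl⟩
    have hq : b • (v + w) + a • (v - w) ∈ segment ℝ (v + w) (v - w) :=
      ⟨b, a, hb, ha, by linarith, rfl⟩
    have hpq : (a • (v + w) + b • (v - w)) + (b • (v + w) + a • (v - w)) = (2 : ℝ) • v := by
      match_scalars <;> linarith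
    have h2 := norm_add_le (a • (v + w) + b • (v - w)) (b • (v + w) + a • (v - w))
    rw [hpq, norm_smul, hv1, Real.norm_two, mul_one] at h2
    have hp := mem_closedBall_zero_iff.1 (hball ⟨a, b, ha, hb, hab, rfl⟩)
    have hq := mem_closedBall_zero_iff.1 (hball hq)
    exact mem_sphere_zero_iff_norm.2 (by linarith)
  have hmid : v ∈ segment ℝ (v + w) (v - w) :=
    ⟨1 / 2, 1 / 2, by norm_num, by norm_num, by norm_num, by module⟩
  have := hv.2.2 _ hsphere (convex_segment _ _) (singleton_subset_iff.2 hmid) ▸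
    left_mem_segment ℝ (v + w) (v - w)
  simpa using this

theorem exists_continuousLinearMap_norm_le_one_comp_eq {M : Type*} [AddCommGroup M]
    [Module ℝ M] (ev : M →ₗ[ℝ] P) (hev : Function.Surjective ev) (ℓ : M →ₗ[ℝ] Q)
    (hℓ : ∀ m, ‖ℓ m‖ ≤ ‖ev m‖) : ∃ V : P →L[ℝ] Q, ‖V‖ ≤ 1 ∧ ∀ m, ℓ m = V (ev m) := by
  have hker : LinearMap.ker ev ≤ LinearMap.ker ℓ := fun m hm =>
    norm_le_zero_iff.1 ((hℓ m).trans_eq (by rw [LinearMap.mem_ker.1 hm, norm_zero]))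
  let V₀ : P →ₗ[ℝ] Q := (LinearMap.ker ev).liftQ ℓ hker ∘ₗ
    (ev.quotKerEquivOfSurjective hev).symm.toLinearMap
  have hV₀ : ∀ m, V₀ (ev m) = ℓ m := fun m => by
    simp [V₀, LinearMap.quotKerEquivOfSurjective_symm_apply]
  have hbound : ∀ p, ‖V₀ p‖ ≤ 1 * ‖p‖ := fun p => by
    obtain ⟨m, rfl⟩ := hev p
    rw [hV₀, one_mul]
    exact hℓ m
  exact ⟨V₀.mkContinuous 1 hbound, V₀.mkContinuous_norm_le zero_le_one hbound,
    fun m => (hV₀ m).symm⟩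

theorem exists_linearIsometryEquiv_of_isometry (A : Submodule ℝ P) (B : Submodule ℝ Q)
    (T : P → Q) (hmap : ∀ f ∈ A, T f ∈ B)
    (hsurj : ∀ g ∈ B, ∃ f ∈ A, T f = g) (hiso : ∀ f ∈ A, ∀ g ∈ A, ‖T f - T g‖ = ‖f - g‖) :
    ∃ L : A ≃ₗᵢ[ℝ] B, ∀ f : A, (L f : Q) = T f - T 0 := by
  have hT0 : T 0 ∈ B := hmap 0 A.zero_mem
  let S : A → B := fun f => ⟨T f - T 0, B.sub_mem (hmap f f.2) hT0⟩
  have hS : Isometry S := Isometry.of_dist_eq fun f g => by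
    rw [Subtype.dist_eq, Subtype.dist_eq, dist_eq_norm, dist_eq_norm, sub_sub_sub_cancel_right]
    exact hiso f f.2 g g.2
  have hSsurj : Function.Surjective S := fun g => by
    obtain ⟨f, hf, hTf⟩ := hsurj (g + T 0) (B.add_mem g.2 hT0)
    exact ⟨⟨f, hf⟩, Subtype.ext (by simp [S, hTf])⟩
  let S' : A ≃ᵢ B := ⟨Equiv.ofBijective S ⟨hS.injective, hSsurj⟩, hS⟩
  have hS'0 : S' 0 = 0 := Subtype.ext (sub_self (T 0))
  exact ⟨S'.toRealLinearIsometryEquivOfMapZero hS'0, fun f => rfl⟩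

end NormedSpace

theorem continuous_of_isClosed_setOf_eq {α β : Type*} [TopologicalSpace α] [TopologicalSpace β]
    [CompactSpace β] {Φ : α → β} (h : IsClosed {p : α × β | p.2 = Φ p.1}) : Continuous Φ := by
  refine continuous_iff_isClosed.2 fun C hC => ?_
  have : Φ ⁻¹' C = Prod.fst '' ({p : α × β | p.2 = Φ p.1} ∩ Prod.snd ⁻¹' C) := by
    ext a
    exact ⟨fun ha => ⟨(a, Φ a), ⟨rfl, ha⟩, rfl⟩, by
      rintro ⟨p, ⟨hp : p.2 = Φ p.1, hpC⟩, rfl⟩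
      exact mem_preimage.2 (hp ▸ hpC)⟩
  rw [this]
  exact isClosedMap_fst_of_compactSpace _ (h.inter (hC.preimage continuous_snd))

section ContinuousMap

variable {α M : Type*} [TopologicalSpace α] [CompactSpace α] [NormedAddCommGroup M]

theorem ContinuousMap.exists_norm_apply_eq_norm_s18 [Nonempty α] (f : C(α, M)) :
    ∃ x, ‖f x‖ = ‖f‖ := by
  obtain ⟨x, -, hx⟩ := isCompact_univ.exists_isMaxOn univ_nonempty f.continuous.norm.continuousOn
  exact ⟨x, le_antisymm (f.norm_coe_le_norm x)
    ((f.norm_le (norm_nonneg _)).2 fun y => hx (mem_univ y))⟩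

theorem ContinuousMap.norm_add_le_one_add {f g : C(α, M)} {U : Set α} {δ : ℝ} (hδ : 0 ≤ δ)
    (hf : ‖f‖ ≤ 1) (hg : ‖g‖ ≤ 1) (hfU : ∀ x ∉ U, ‖f x‖ ≤ δ) (hgU : ∀ x ∈ U, ‖g x‖ ≤ δ) :
    ‖f + g‖ ≤ 1 + δ := by
  refine ((f + g).norm_le (by linarith)).2 fun x => (norm_add_le (f x) (g x)).trans ?_
  by_cases hx : x ∈ U
  · linarith [hgU x hx, (f.norm_coe_le_norm x).trans hf]
  · linarith [hfU x hx, (g.norm_coe_le_norm x).trans hg]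

variable [NormedSpace ℝ M]

theorem ContinuousMap.midpoint_apply (f g : C(α, M)) (x : α) :
    midpoint ℝ f g x = midpoint ℝ (f x) (g x) := by
  simp only [midpoint_eq_smul_add, coe_smul, coe_add, Pi.smul_apply, Pi.add_apply]

theorem ContinuousMap.exists_mem_norm_apply_eq_one [Nonempty α] {f g : C(α, M)} {U : Set α}
    (hf : ‖f‖ ≤ 1) (hg : ‖g‖ ≤ 1) (hfg : ‖midpoint ℝ f g‖ = 1) (hfU : ∀ x ∉ U, ‖f x‖ < 1) :
    ∃ x ∈ U, ‖g x‖ = 1 := by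
  obtain ⟨x, hx⟩ := (midpoint ℝ f g).exists_norm_apply_eq_norm_s18
  rw [hfg, midpoint_apply] at hx
  obtain ⟨hfx, hgx⟩ := norm_eq_one_of_norm_midpoint_eq_one
    ((f.norm_coe_le_norm x).trans hf) ((g.norm_coe_le_norm x).trans hg) hx
  exact ⟨x, not_not.1 fun hxU => (hfU x hxU).ne hfx, hgx⟩

/-- By compactness it suffices that the closed sets `{x | ‖f x‖ = 1}`, `f ∈ 𝒩`, be directed;
the midpoint of `f` and `g` has norm one only where both `f` and `g` do. -/
theorem ContinuousMap.exists_forall_norm_apply_eq_one {𝒩 : Set C(α, M)} (hconv : Convex ℝ 𝒩)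
    (hne : 𝒩.Nonempty) (h𝒩 : 𝒩 ⊆ sphere 0 1) : ∃ x, ∀ f ∈ 𝒩, ‖f x‖ = 1 := by
  obtain ⟨f₀, hf₀⟩ := hne
  have : Nonempty α := by
    by_contra hα
    rw [not_nonempty_iff] at hα
    simpa [Subsingleton.elim f₀ 0] using h𝒩 hf₀
  have : Nonempty 𝒩 := ⟨⟨f₀, hf₀⟩⟩
  have hnorm : ∀ f ∈ 𝒩, ‖f‖ = 1 := fun f hf => mem_sphere_zero_iff_norm.1 (h𝒩 hf)
  let t : 𝒩 → Set α := fun f => {x | ‖(f : C(α, M)) x‖ = 1}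
  have hclosed : ∀ f, IsClosed (t f) := fun _ =>
    isClosed_eq (map_continuous _).norm continuous_const
  have hnonempty : ∀ f, (t f).Nonempty := fun f => by
    obtain ⟨x, hx⟩ := exists_norm_apply_eq_norm_s18 (f : C(α, M))
    exact ⟨x, hx.trans (hnorm f f.2)⟩
  have hdir : Directed (· ⊇ ·) t := fun f g => by
    refine ⟨⟨midpoint ℝ f g, hconv.midpoint_mem f.2 g.2⟩, ?_⟩
    have key : ∀ x ∈ t ⟨midpoint ℝ f g, hconv.midpoint_mem f.2 g.2⟩, x ∈ t f ∧ x ∈ t g :=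
      fun x hx => norm_eq_one_of_norm_midpoint_eq_one
        (((f : C(α, M)).norm_coe_le_norm x).trans (hnorm f f.2).le)
        (((g : C(α, M)).norm_coe_le_norm x).trans (hnorm g g.2).le)
        (by rw [← midpoint_apply]; exact hx)
    exact ⟨fun x hx => (key x hx).1, fun x hx => (key x hx).2⟩
  obtain ⟨x, hx⟩ := IsCompact.nonempty_iInter_of_directed_nonempty_isCompact_isClosed t hdir
    hnonempty (fun f => (hclosed f).isCompact) hclosed
  exact ⟨x, fun f hf => mem_iInter.1 hx ⟨f, hf⟩⟩

end ContinuousMap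

section PointEval

variable {α M : Type*} [TopologicalSpace α] [NormedAddCommGroup M] [NormedSpace ℝ M]
  (A : Submodule ℝ C(α, M))

def pointEval (x : α) : A →ₗ[ℝ] M where
  toFun f := (f : C(α, M)) x
  map_add' _ _ := rfl
  map_smul' _ _ := rfl

@[simp]
theorem pointEval_apply (x : α) (f : A) : pointEval A x f = (f : C(α, M)) x := rfl

variable {A} in
def IsPeakPoint (𝒩 : Set A) (x : α) : Prop :=
  ∀ U ∈ 𝓝 x, ∀ ε > 0, ∃ h ∈ 𝒩, ∀ z ∉ U, ‖(h : C(α, M)) z‖ < ε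

variable [CompactSpace α]

theorem norm_pointEval_le (x : α) (f : A) : ‖pointEval A x f‖ ≤ ‖f‖ :=
  ContinuousMap.norm_coe_le_norm _ x

def evalFace (x : α) (v : M) : Set A := sphere 0 1 ∩ pointEval A x ⁻¹' {v}

variable {A}

theorem exists_apply_eq_norm_eq_of_mem_strongBoundaryPoints {x : α}
    (hx : x ∈ strongBoundaryPoints (A : Set C(α, M))) (e : M) :
    ∃ f : A, (f : C(α, M)) x = e ∧ ‖f‖ = ‖e‖ := by
  rcases eq_or_ne e 0 with rfl | he
  · exact ⟨0, rfl, by simp⟩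
  have he' : ‖e‖ ≠ 0 := norm_ne_zero_iff.2 he
  obtain ⟨f, hfA, hf1, hfx, -⟩ := hx univ univ_mem 1 one_pos (‖e‖⁻¹ • e) (by
    rw [norm_smul, norm_inv, norm_norm, inv_mul_cancel₀ he'])
  refine ⟨‖e‖ • ⟨f, hfA⟩, ?_, ?_⟩
  · simp [hfx, smul_smul, mul_inv_cancel₀ he']
  · rw [norm_smul, norm_norm, Submodule.coe_norm, hf1, mul_one]

theorem pointEval_surjective {x : α} (hx : x ∈ strongBoundaryPoints (A : Set C(α, M))) :
    Function.Surjective (pointEval A x) := fun e =>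
  (exists_apply_eq_norm_eq_of_mem_strongBoundaryPoints hx e).imp fun _ hf => hf.1

/-- The functions of `𝒩` share a norming point `x`; enlarging their values at `x` to a maximal
convex subset `D` of the unit sphere and using maximality of `𝒩` shows that `𝒩` contains every
unit vector of `A` with value in `D` at `x`, in particular the peaking functions at `x`. -/
theorem MaxConvexIn.exists_isPeakPoint (hA : strongBoundaryPoints (A : Set C(α, M)) = univ)
    {𝒩 : Set A} (h𝒩 : MaxConvexIn (sphere 0 1) 𝒩) (hne : 𝒩.Nonempty) :
    ∃ x, IsPeakPoint 𝒩 x := by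
  obtain ⟨x, hx⟩ := ContinuousMap.exists_forall_norm_apply_eq_one
    (h𝒩.2.1.linear_image A.subtype) (hne.image _) (by
      rintro _ ⟨f, hf, rfl⟩
      exact h𝒩.1 hf)
  obtain ⟨D, h𝒩D, hD⟩ := exists_maxConvexIn_superset (S := sphere (0 : M) 1)
    (by rintro _ ⟨f, hf, rfl⟩; exact mem_sphere_zero_iff_norm.2 (hx f ⟨f, hf, rfl⟩))
    (h𝒩.2.1.linear_image (pointEval A x))
  have h𝒩_eq : sphere 0 1 ∩ pointEval A x ⁻¹' D = 𝒩 :=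
    h𝒩.2.2 _ inter_subset_left
      (convex_sphere_inter_preimage hD.2.1 hD.1 _ (norm_pointEval_le A x))
      fun f hf => ⟨h𝒩.1 hf, h𝒩D ⟨f, hf, rfl⟩⟩
  obtain ⟨f₀, hf₀⟩ := hne
  refine ⟨x, fun U hU ε hε => ?_⟩
  obtain ⟨h, hA, hh1, hhx, hhU⟩ := (hA ▸ mem_univ x : x ∈ strongBoundaryPoints _) U hU ε hε
    _ (hx f₀ ⟨f₀, hf₀, rfl⟩)
  exact ⟨⟨h, hA⟩, h𝒩_eq ▸ ⟨mem_sphere_zero_iff_norm.2 hh1, by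
    rw [mem_preimage, pointEval_apply, hhx]; exact h𝒩D ⟨f₀, hf₀, rfl⟩⟩, hhU⟩

theorem exists_mem_evalFace_of_mem_strongBoundaryPoints {x : α}
    (hx : x ∈ strongBoundaryPoints (A : Set C(α, M))) {v : M} (hv : ‖v‖ = 1) {U : Set α}
    (hU : U ∈ 𝓝 x) {ε : ℝ} (hε : 0 < ε) :
    ∃ h ∈ evalFace A x v, ∀ z ∉ U, ‖(h : C(α, M)) z‖ < ε := by
  obtain ⟨h, hA, hh1, hhx, hhU⟩ := hx U hU ε hε v hv
  exact ⟨⟨h, hA⟩, ⟨mem_sphere_zero_iff_norm.2 hh1, hhx⟩, hhU⟩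

/-- A convex set `C` of unit vectors containing the face must have all its values at `x` of norm
one (by peaking functions at `x`, which lie in the face), so these values form a convex subset of
the unit sphere of `M` containing `v`, i.e. `{v}`. -/
theorem maxConvexIn_evalFace {x : α} (hx : x ∈ strongBoundaryPoints (A : Set C(α, M))) {v : M}
    (hv : MaxConvexIn (sphere 0 1) {v}) : MaxConvexIn (sphere 0 1) (evalFace A x v) := by
  have : Nonempty α := ⟨x⟩
  have hpeak : ∀ U ∈ 𝓝 x, ∃ h ∈ evalFace A x v, ∀ z ∉ U, ‖(h : C(α, M)) z‖ < 1 :=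
    fun U hU => exists_mem_evalFace_of_mem_strongBoundaryPoints hx
      (mem_sphere_zero_iff_norm.1 (hv.1 rfl)) hU one_pos
  refine ⟨inter_subset_left, convex_sphere_inter_preimage (convex_singleton v)
    (singleton_subset_iff.2 (hv.1 rfl)) _ (norm_pointEval_le A x), fun C hCS hC hfaceC => ?_⟩
  have hnorm : ∀ g ∈ C, ‖(g : C(α, M)) x‖ = 1 := by
    intro g hg
    have hx_mem : x ∈ closure {z | ‖(g : C(α, M)) z‖ = 1} := by
      refine mem_closure_iff_nhds.2 fun U hU => ?_
      obtain ⟨h, hh, hhU⟩ := hpeak U hU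
      have hmid : ((midpoint ℝ h g : A) : C(α, M)) = midpoint ℝ (h : C(α, M)) g := by
        simp only [midpoint_eq_smul_add, Submodule.coe_smul, Submodule.coe_add]
      have hmid1 := mem_sphere_zero_iff_norm.1 (hCS (hC.midpoint_mem (hfaceC hh) hg))
      rw [Submodule.coe_norm, hmid] at hmid1
      exact ContinuousMap.exists_mem_norm_apply_eq_one (mem_sphere_zero_iff_norm.1 hh.1).le
        (mem_sphere_zero_iff_norm.1 (hCS hg)).le hmid1 hhU
    rwa [(isClosed_eq (map_continuous _).norm continuous_const).closure_eq] at hx_mem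
  obtain ⟨h, hh, -⟩ := hpeak univ univ_mem
  have hvalues : pointEval A x '' C = {v} :=
    hv.2.2 _ (by rintro _ ⟨g, hg, rfl⟩; exact mem_sphere_zero_iff_norm.2 (hnorm g hg))
      (hC.linear_image _) (singleton_subset_iff.2 ⟨h, hfaceC hh, hh.2⟩)
  exact Subset.antisymm (fun g hg => ⟨hCS hg, hvalues.subset ⟨g, hg, rfl⟩⟩) hfaceC

end PointEval

section Representation

variable {α β M N : Type*} [TopologicalSpace α] [CompactSpace α] [TopologicalSpace β]
  [CompactSpace β] [NormedAddCommGroup M] [NormedSpace ℝ M] [NormedAddCommGroup N]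
  [NormedSpace ℝ N] {A : Submodule ℝ C(α, M)} {B : Submodule ℝ C(β, N)} (L : A ≃ₗᵢ[ℝ] B)
  {v : N} {x : α} {y : β}

theorem norm_add_apply_le_one_of_isPeakPoint (hx : IsPeakPoint (L ⁻¹' evalFace B y v) x)
    {g : A} (hg : ‖g‖ ≤ 1) (hgx : (g : C(α, M)) x = 0) : ‖v + (L g : C(β, N)) y‖ ≤ 1 := by
  refine le_of_forall_pos_le_add fun δ hδ => ?_
  have hU : {z | ‖(g : C(α, M)) z‖ < δ} ∈ 𝓝 x :=
    (isOpen_lt (map_continuous _).norm continuous_const).mem_nhds (by simp [hgx, hδ])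
  obtain ⟨h, ⟨hh1, hhy⟩, hhU⟩ := hx _ hU δ hδ
  have hh : ‖h‖ = 1 := by rw [← L.norm_map]; exact mem_sphere_zero_iff_norm.1 hh1
  calc ‖v + (L g : C(β, N)) y‖ = ‖(L (h + g) : C(β, N)) y‖ := by
        rw [← mem_singleton_iff.1 hhy]; simp
    _ ≤ ‖L (h + g)‖ := ContinuousMap.norm_coe_le_norm _ _
    _ = ‖h + g‖ := L.norm_map _
    _ ≤ 1 + δ := ContinuousMap.norm_add_le_one_add hδ.le hh.le hg (fun z hz => (hhU z hz).le)
        fun _ hz => hz.le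

theorem apply_eq_zero_of_isPeakPoint (hv : MaxConvexIn (sphere 0 1) {v})
    (hx : IsPeakPoint (L ⁻¹' evalFace B y v) x) {f : A} (hfx : (f : C(α, M)) x = 0) :
    (L f : C(β, N)) y = 0 := by
  set r : ℝ := (‖f‖ + 1)⁻¹
  have hr : 0 < r := by positivity
  have hrf : ‖r • f‖ ≤ 1 := by
    rw [norm_smul, Real.norm_of_nonneg hr.le, inv_mul_le_iff₀ (by positivity)]
    linarith
  have hadd := norm_add_apply_le_one_of_isPeakPoint L hx hrf (by simp [hfx])
  have hsub := norm_add_apply_le_one_of_isPeakPoint L hx (g := -(r • f)) (by rwa [norm_neg])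
    (by simp [hfx])
  rw [map_neg, Submodule.coe_neg, ContinuousMap.neg_apply, ← sub_eq_add_neg] at hsub
  have := hv.eq_zero_of_norm_add_le_of_norm_sub_le hadd hsub
  rw [map_smul, Submodule.coe_smul, ContinuousMap.smul_apply, smul_eq_zero] at this
  exact this.resolve_left hr.ne'

theorem norm_apply_le_of_isPeakPoint (hv : MaxConvexIn (sphere 0 1) {v})
    (hxA : x ∈ strongBoundaryPoints (A : Set C(α, M)))
    (hx : IsPeakPoint (L ⁻¹' evalFace B y v) x) (f : A) :
    ‖(L f : C(β, N)) y‖ ≤ ‖(f : C(α, M)) x‖ := by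
  obtain ⟨g, hgx, hg⟩ := exists_apply_eq_norm_eq_of_mem_strongBoundaryPoints hxA ((f : C(α, M)) x)
  have hfg := apply_eq_zero_of_isPeakPoint L hv hx (f := f - g) (by simp [hgx])
  rw [map_sub, Submodule.coe_sub, ContinuousMap.sub_apply, sub_eq_zero] at hfg
  calc ‖(L f : C(β, N)) y‖ = ‖(L g : C(β, N)) y‖ := by rw [hfg]
    _ ≤ ‖L g‖ := ContinuousMap.norm_coe_le_norm _ _
    _ = ‖(f : C(α, M)) x‖ := by rw [L.norm_map, hg]

theorem eq_of_isPeakPoint_of_norm_apply_le [T1Space α] (hv : ‖v‖ = 1)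
    (hx : IsPeakPoint (L ⁻¹' evalFace B y v) x) {x' : α}
    (hx' : ∀ f : A, ‖(L f : C(β, N)) y‖ ≤ ‖(f : C(α, M)) x'‖) : x' = x := by
  by_contra hne
  obtain ⟨h, ⟨-, hhy⟩, hhU⟩ := hx {x'}ᶜ (isOpen_compl_singleton.mem_nhds (Ne.symm hne)) 1 one_pos
  have := (hx' h).trans_lt (hhU x' (not_not.2 rfl))
  rw [show (L h : C(β, N)) y = v from hhy, hv] at this
  exact this.false

theorem exists_continuous_forall_apply_eq [T1Space α] (hv : MaxConvexIn (sphere 0 1) {v})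
    (hA : strongBoundaryPoints (A : Set C(α, M)) = univ)
    (hB : strongBoundaryPoints (B : Set C(β, N)) = univ) :
    ∃ (Φ : β → α) (V : β → M →L[ℝ] N), Continuous Φ ∧ (∀ y, ‖V y‖ ≤ 1) ∧
      ∀ (f : A) (y : β), (L f : C(β, N)) y = V y ((f : C(α, M)) (Φ y)) := by
  have hv1 : ‖v‖ = 1 := mem_sphere_zero_iff_norm.1 (hv.1 rfl)
  have hpeak : ∀ y, ∃ x, IsPeakPoint (L ⁻¹' evalFace B y v) x := fun y => by
    have hyB : y ∈ strongBoundaryPoints (B : Set C(β, N)) := hB ▸ mem_univ y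
    obtain ⟨g, hg, -⟩ := exists_mem_evalFace_of_mem_strongBoundaryPoints hyB hv1 univ_mem one_pos
    exact ((maxConvexIn_evalFace hyB hv).preimage_linearIsometryEquiv L).exists_isPeakPoint hA
      ⟨L.symm g, by simpa using hg⟩
  choose Φ hΦ using hpeak
  have hbound : ∀ y (f : A), ‖(L f : C(β, N)) y‖ ≤ ‖(f : C(α, M)) (Φ y)‖ := fun y =>
    norm_apply_le_of_isPeakPoint L hv (hA ▸ mem_univ _) (hΦ y)
  have hgraph : {p : β × α | p.2 = Φ p.1} =
      ⋂ f : A, {p | ‖(L f : C(β, N)) p.1‖ ≤ ‖(f : C(α, M)) p.2‖} := by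
    ext ⟨y, x⟩
    refine ⟨fun (hx : x = Φ y) => mem_iInter.2 fun f => hx ▸ hbound y f, fun hx =>
      eq_of_isPeakPoint_of_norm_apply_le L hv1 (hΦ y) (mem_iInter.1 hx)⟩
  have hΦc : Continuous Φ := continuous_of_isClosed_setOf_eq (hgraph ▸ isClosed_iInter fun f =>
    isClosed_le (by fun_prop) (by fun_prop))
  choose V hV1 hV using fun y => exists_continuousLinearMap_norm_le_one_comp_eq
    (pointEval A (Φ y)) (pointEval_surjective (hA ▸ mem_univ _)) (pointEval B y ∘ₗ L.toLinearMap)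
    (hbound y)
  exact ⟨Φ, V, hΦc, hV1, fun f y => hV y f⟩

end Representation

theorem stmt18_general (v : F) (hv : MaxConvexIn (sphere (0 : F) 1) {v})
    (A : Subspace 𝕂 C(X, E))
    (hΘA : strongBoundaryPoints (A : Set C(X, E)) = Set.univ)
    (B : Subspace 𝕂 C(Y, F))
    (hΘB : strongBoundaryPoints (B : Set C(Y, F)) = Set.univ)
    (T : C(X, E) → C(Y, F))
    (hmap : ∀ f ∈ A, T f ∈ B)
    (hsurj : ∀ g ∈ B, ∃ f ∈ A, T f = g)
    (hiso : ∀ f ∈ A, ∀ g ∈ A, ‖T f - T g‖ = ‖f - g‖) :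
    ∃ (Φ : Y → X) (V : Y → (E →L[ℝ] F)),
      Continuous Φ ∧
      (∀ y : Y, ‖V y‖ ≤ 1) ∧
      (∀ f ∈ A, ∀ y : Y, T f y = T 0 y + V y (f (Φ y))) := by
  obtain ⟨L, hL⟩ := exists_linearIsometryEquiv_of_isometry (A.restrictScalars ℝ)
    (B.restrictScalars ℝ) T hmap hsurj hiso
  obtain ⟨Φ, V, hΦ, hV1, hV⟩ := exists_continuous_forall_apply_eq L hv hΘA hΘB
  refine ⟨Φ, V, hΦ, hV1, fun f hf y => ?_⟩
  rw [← hV ⟨f, hf⟩ y, hL, ContinuousMap.sub_apply, add_sub_cancel]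

/-- If `{v}` is a singleton maximal convex subset of `S(F)`, `A` is closed with
`Θ(A) = X` and `Θ(B) = Y`, then any surjective isometry `T : A → B` is
represented by a continuous map `Φ : Y → X` and real-linear operators
`V_y : E → F` with `‖V_y‖ ≤ 1`. -/
theorem stmt18 (v : F) (hv : MaxConvexIn (sphere (0 : F) 1) {v})
    (A : Subspace 𝕂 C(X, E)) (hAcl : IsClosed (A : Set C(X, E)))
    (hΘA : strongBoundaryPoints (A : Set C(X, E)) = Set.univ)
    (B : Subspace 𝕂 C(Y, F))
    (hΘB : strongBoundaryPoints (B : Set C(Y, F)) = Set.univ)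
    (T : C(X, E) → C(Y, F))
    (hmap : ∀ f ∈ A, T f ∈ B)
    (hsurj : ∀ g ∈ B, ∃ f ∈ A, T f = g)
    (hiso : ∀ f ∈ A, ∀ g ∈ A, ‖T f - T g‖ = ‖f - g‖) :
    ∃ (Φ : Y → X) (V : Y → (E →L[ℝ] F)),
      Continuous Φ ∧
      (∀ y : Y, ‖V y‖ ≤ 1) ∧
      (∀ f ∈ A, ∀ y : Y, T f y = T 0 y + V y (f (Φ y))) :=
  stmt18_general v hv A hΘA B hΘB T hmap hsurj hiso
end

section
/- Let X, Y be compact Hausdorff spaces and E, F Banach spaces over 𝕂 ∈ {ℝ, ℂ} such that S(F) contains a point v for which {v} is a maximal convex subset of S(F), and S(E) contains a point u for which {u} is a maximal convex subset of S(E). Let A be a closed 𝕂-linear subspace of C(X,E) with Θ(A) = X and B a 𝕂-linear subspace of C(Y,F) with Θ(B) = Y. Then for any surjective (not necessarily linear) isometry T : A → B there exist a homeomorphism Φ : Y → X and a family {V_y}_{y∈Y} of surjective real-linear isometries from E onto F such that Tf(y) = T0(y) + V_y(f(Φ(y))) for all f ∈ A and all y ∈ Y. -/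
open Set Metric

variable {𝕂 : Type*} [RCLike 𝕂]
variable {X : Type*} [TopologicalSpace X] [CompactSpace X] [T2Space X]
variable {Y : Type*} [TopologicalSpace Y] [CompactSpace Y] [T2Space Y]
variable {E : Type*} [NormedAddCommGroup E] [NormedSpace ℝ E] [NormedSpace 𝕂 E]
  [IsScalarTower ℝ 𝕂 E] [CompleteSpace E]
variable {F : Type*} [NormedAddCommGroup F] [NormedSpace ℝ F] [NormedSpace 𝕂 F]
  [IsScalarTower ℝ 𝕂 F] [CompleteSpace F]

/-!
Subtracting `T 0` makes `T` a real-linear isometry `S : A ≃ₗᵢ[ℝ] B` (Mazur–Ulam). For `y ∈ Y`,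
the functions `f` of the unit ball with `S f y = v` form a convex set, so the closed sets where
they attain norm one have the finite intersection property: they meet at some `Φ y`. Since `{v}`
is a maximal convex subset of the sphere, membership in that set is detected by `‖f + f'‖ = 2`
against its members, and then peak functions at `Φ y` show that `f (Φ y) = 0` forces
`‖v ± S f y‖ ≤ 1`, hence `S f y = 0`. So `S f y` depends linearly and isometrically on `f (Φ y)`,
which gives `V y`. The same construction for `S⁻¹` and `u` inverts `Φ`, and peak functions also
make `Φ` continuous, hence a homeomorphism of compact Hausdorff spaces.
-/

open Filter Topology

section UnitSphere

variable {G : Type*} [NormedAddCommGroup G] [NormedSpace ℝ G] {v a b c : G}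

lemma norm_smul_add_smul_eq_one (ha : ‖a‖ ≤ 1) (hb : ‖b‖ ≤ 1) (hab : ‖a + b‖ = 2) {s t : ℝ}
    (hs : 0 ≤ s) (ht : 0 ≤ t) (hst : s + t = 1) : ‖s • a + t • b‖ = 1 := by
  have hle : ∀ s t : ℝ, 0 ≤ s → 0 ≤ t → s + t = 1 → ‖s • a + t • b‖ ≤ 1 := by
    intro s t hs ht hst
    calc ‖s • a + t • b‖ ≤ s * ‖a‖ + t * ‖b‖ := by
          refine (norm_add_le _ _).trans_eq ?_
          rw [norm_smul, norm_smul, Real.norm_of_nonneg hs, Real.norm_of_nonneg ht]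
      _ ≤ s + t := by nlinarith
      _ = 1 := hst
  -- the reflected combination `t • a + s • b` completes `s • a + t • b` to `a + b`
  have hsum : (s • a + t • b) + (t • a + s • b) = a + b := by
    rw [← one_smul ℝ (a + b), ← hst]; module
  have := norm_add_le (s • a + t • b) (t • a + s • b)
  rw [hsum, hab] at this
  linarith [hle s t hs ht hst, hle t s ht hs (by linarith)]

lemma segment_subset_sphere (ha : ‖a‖ ≤ 1) (hb : ‖b‖ ≤ 1) (hab : ‖a + b‖ = 2) :
    segment ℝ a b ⊆ sphere (0 : G) 1 := by
  rintro _ ⟨s, t, hs, ht, hst, rfl⟩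
  exact mem_sphere_zero_iff_norm.2 (norm_smul_add_smul_eq_one ha hb hab hs ht hst)

lemma norm_add_eq_two_of_norm_midpoint_eq_one (h : ‖(2⁻¹ : ℝ) • a + (2⁻¹ : ℝ) • b‖ = 1) :
    ‖a + b‖ = 2 := by
  rw [← smul_add, norm_smul] at h
  norm_num at h
  linarith

lemma one_le_norm_and_norm_add_eq_two_of_norm_add_midpoint (ha : ‖a‖ ≤ 1) (hb : ‖b‖ ≤ 1)
    (hc : ‖c‖ ≤ 1) (h : ‖a + ((2⁻¹ : ℝ) • b + (2⁻¹ : ℝ) • c)‖ = 2) : 1 ≤ ‖b‖ ∧ ‖a + c‖ = 2 := by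
  have hmid : ‖(2⁻¹ : ℝ) • b + (2⁻¹ : ℝ) • c‖ ≤ 2⁻¹ * ‖b‖ + 2⁻¹ * ‖c‖ := by
    refine (norm_add_le _ _).trans_eq ?_
    rw [norm_smul, norm_smul, Real.norm_of_nonneg (by norm_num)]
  have hsplit : (2 : ℝ) • (a + ((2⁻¹ : ℝ) • b + (2⁻¹ : ℝ) • c)) = (a + b) + (a + c) := by
    module
  have h4 := norm_add_le (a + b) (a + c)
  rw [← hsplit, norm_smul, h] at h4
  norm_num at h4
  constructor
  · linarith [norm_add_le a ((2⁻¹ : ℝ) • b + (2⁻¹ : ℝ) • c)]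
  · linarith [norm_add_le a b, norm_add_le a c]

namespace MaxConvexIn

variable (hv : MaxConvexIn (sphere (0 : G) 1) {v})
include hv

lemma norm_eq_one : ‖v‖ = 1 :=
  mem_sphere_zero_iff_norm.1 (hv.1 rfl)

lemma segment_eq (ha : ‖a‖ ≤ 1) (hb : ‖b‖ ≤ 1) (hab : ‖a + b‖ = 2)
    (hva : v ∈ segment ℝ a b) : segment ℝ a b = {v} :=
  hv.2.2 _ (segment_subset_sphere ha hb hab) (convex_segment a b) (singleton_subset_iff.2 hva)

lemma eq_of_norm_add_eq_two {w : G} (hw : ‖w‖ ≤ 1) (h : ‖v + w‖ = 2) : w = v := by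
  simpa [hv.segment_eq hv.norm_eq_one.le hw h (left_mem_segment ℝ v w)]
    using right_mem_segment ℝ v w

lemma eq_zero_of_norm_add_le_of_norm_sub_le_s19 {w : G} (h₁ : ‖v + w‖ ≤ 1) (h₂ : ‖v - w‖ ≤ 1) :
    w = 0 := by
  have hsum : ‖(v + w) + (v - w)‖ = 2 := by
    rw [show (v + w) + (v - w) = (2 : ℝ) • v by module, norm_smul, hv.norm_eq_one]; norm_num
  have hmid : v ∈ segment ℝ (v + w) (v - w) := ⟨2⁻¹, 2⁻¹, by norm_num, by norm_num, by norm_num,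
    by module⟩
  simpa using (hv.segment_eq h₁ h₂ hsum hmid).subset (left_mem_segment ℝ _ _)

end MaxConvexIn

end UnitSphere

lemma LinearMap.exists_linearIsometry_comp_eq {G₁ G₂ G₃ : Type*} [AddCommGroup G₁]
    [Module ℝ G₁] [NormedAddCommGroup G₂] [NormedSpace ℝ G₂] [NormedAddCommGroup G₃]
    [NormedSpace ℝ G₃] (π : G₁ →ₗ[ℝ] G₂) (hπ : Function.Surjective π) (φ : G₁ →ₗ[ℝ] G₃)
    (hφ : ∀ f, ‖φ f‖ = ‖π f‖) : ∃ V : G₂ →ₗᵢ[ℝ] G₃, ∀ f, V (π f) = φ f := by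
  have hker : LinearMap.ker π ≤ LinearMap.ker φ := fun f hf => by
    simpa [← norm_eq_zero (a := φ f), hφ] using hf
  set ψ : G₂ →ₗ[ℝ] G₃ :=
    (LinearMap.ker π).liftQ φ hker ∘ₗ (π.quotKerEquivOfSurjective hπ).symm.toLinearMap
  have hψ : ∀ f, ψ (π f) = φ f := fun f => by
    simp [ψ, LinearMap.quotKerEquivOfSurjective_symm_apply]
  refine ⟨{ ψ with norm_map' := fun w => ?_ }, hψ⟩
  obtain ⟨f, rfl⟩ := hπ w
  exact (congrArg norm (hψ f)).trans (hφ f)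

lemma ContinuousMap.exists_norm_apply_eq_norm_s19 {Z M : Type*} [TopologicalSpace Z] [CompactSpace Z]
    [NormedAddCommGroup M] (f : C(Z, M)) (hf : f ≠ 0) :
    ∃ x, ‖f x‖ = ‖f‖ := by
  have : Nonempty Z := by
    by_contra hZ
    exact hf (ContinuousMap.ext fun x => (hZ ⟨x⟩).elim)
  obtain ⟨x, -, hx⟩ := isCompact_univ.exists_isMaxOn univ_nonempty
    (continuous_norm.comp f.continuous).continuousOn
  exact ⟨x, le_antisymm (f.norm_coe_le_norm x) ((f.norm_le (norm_nonneg _)).2 fun x' => hx trivial)⟩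

section FunctionSpace

variable {Z : Type*} [TopologicalSpace Z] [CompactSpace Z]
  {M : Type*} [NormedAddCommGroup M] [NormedSpace ℝ M] {P : Submodule ℝ C(Z, M)}

lemma norm_apply_le_of_norm_le {f : P} {r : ℝ} (hf : ‖f‖ ≤ r) (x : Z) :
    ‖(f : C(Z, M)) x‖ ≤ r :=
  ((f : C(Z, M)).norm_coe_le_norm x).trans hf

variable (hP : strongBoundaryPoints (P : Set C(Z, M)) = univ)
include hP

lemma exists_peakFunction (x : Z) {U : Set Z} (hU : U ∈ 𝓝 x) {ε : ℝ} (hε : 0 < ε) {w : M}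
    (hw : ‖w‖ = 1) :
    ∃ f : P, ‖f‖ = 1 ∧ (f : C(Z, M)) x = w ∧ ∀ x' ∉ U, ‖(f : C(Z, M)) x'‖ < ε := by
  obtain ⟨f, hfP, hf⟩ := (hP ▸ mem_univ x : x ∈ strongBoundaryPoints _) U hU ε hε w hw
  exact ⟨⟨f, hfP⟩, hf⟩

lemma exists_apply_eq_norm_eq (x : Z) (w : M) :
    ∃ f : P, (f : C(Z, M)) x = w ∧ ‖f‖ = ‖w‖ := by
  rcases eq_or_ne w 0 with rfl | hw
  · exact ⟨0, by simp, by simp⟩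
  have hw' : ‖‖w‖⁻¹ • w‖ = 1 := by
    rw [norm_smul, norm_inv, norm_norm, inv_mul_cancel₀ (norm_ne_zero_iff.2 hw)]
  obtain ⟨f, hf, hfx, -⟩ := exists_peakFunction hP x univ_mem one_pos hw'
  refine ⟨‖w‖ • f, ?_, ?_⟩
  · simp [hfx, smul_smul, mul_inv_cancel₀ (norm_ne_zero_iff.2 hw)]
  · rw [norm_smul, hf, norm_norm, mul_one]

lemma apply_eq_of_forall_norm_add_eq_two {v : M} (hv : MaxConvexIn (sphere (0 : M) 1) {v})
    {x : Z} {g : C(Z, M)} (hg : ‖g‖ ≤ 1)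
    (h : ∀ f : P, ‖f‖ ≤ 1 → (f : C(Z, M)) x = v → ‖g + f‖ = 2) : g x = v := by
  have hgle : ∀ z, ‖g z‖ ≤ 1 := fun z => (g.norm_coe_le_norm z).trans hg
  obtain ⟨f₀, hf₀, hf₀x, -⟩ := exists_peakFunction hP x univ_mem one_pos hv.norm_eq_one
  set D := {z | ‖g z + (f₀ : C(Z, M)) z‖ = 2}
  suffices hxD : x ∈ closure D by
    rw [(isClosed_eq (by fun_prop) continuous_const).closure_eq] at hxD
    refine hv.eq_of_norm_add_eq_two (hgle x) ?_
    rw [add_comm, ← hf₀x]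
    exact hxD
  refine mem_closure_iff_nhds.2 fun U hU => ?_
  obtain ⟨f₁, hf₁, hf₁x, hf₁U⟩ :=
    exists_peakFunction hP x hU (by norm_num : (0 : ℝ) < 1) hv.norm_eq_one
  -- the average of `f₁` and `f₀` is admissible; where `g` plus it attains norm `2`,
  -- `f₁` has norm one (so we are in `U`) and `g + f₀` has norm `2`
  set f : P := (2⁻¹ : ℝ) • f₁ + (2⁻¹ : ℝ) • f₀
  have hf : ‖f‖ ≤ 1 := by
    refine (norm_add_le _ _).trans ?_
    rw [norm_smul, norm_smul, hf₁, hf₀]; norm_num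
  have hfx : (f : C(Z, M)) x = v := by
    simp only [f, Submodule.coe_add, Submodule.coe_smul, ContinuousMap.add_apply,
      ContinuousMap.smul_apply, hf₁x, hf₀x]
    module
  have hgf := h f hf hfx
  obtain ⟨z, hz⟩ := (g + f).exists_norm_apply_eq_norm_s19 (by
    rw [← norm_ne_zero_iff, hgf]; norm_num)
  rw [hgf] at hz
  simp only [f, Submodule.coe_add, Submodule.coe_smul, ContinuousMap.add_apply,
    ContinuousMap.smul_apply] at hz
  obtain ⟨hf₁z, hgf₀z⟩ := one_le_norm_and_norm_add_eq_two_of_norm_add_midpoint (hgle z)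
    (norm_apply_le_of_norm_le hf₁.le z) (norm_apply_le_of_norm_le hf₀.le z) hz
  exact ⟨z, not_not.1 fun hzU => (hf₁U z hzU).not_ge hf₁z, hgf₀z⟩

end FunctionSpace

section IsometryOfFunctionSpaces

variable {Z : Type*} [TopologicalSpace Z] [CompactSpace Z]
  {M : Type*} [NormedAddCommGroup M] [NormedSpace ℝ M] {P : Submodule ℝ C(Z, M)}
  {W : Type*} [TopologicalSpace W] [CompactSpace W]
  {N : Type*} [NormedAddCommGroup N] [NormedSpace ℝ N] {Q : Submodule ℝ C(W, N)}
  (S : P ≃ₗᵢ[ℝ] Q)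

def ballFiber (v : N) (y : W) : Set P :=
  {f | ‖f‖ ≤ 1 ∧ (S f : C(W, N)) y = v}

def peakPoints (v : N) (y : W) : Set Z :=
  {x | ∀ f ∈ ballFiber S v y, ‖(f : C(Z, M)) x‖ = 1}

variable {S} {v : N} {y : W}

lemma convex_ballFiber : Convex ℝ (ballFiber S v y) := by
  have hlin : ballFiber S v y = closedBall 0 1 ∩
      ((ContinuousMap.evalCLM ℝ y).toLinearMap ∘ₗ Q.subtype ∘ₗ S.toLinearMap) ⁻¹' {v} := by
    ext f; simp [ballFiber]
  rw [hlin]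
  exact (convex_closedBall 0 1).inter ((convex_singleton v).linear_preimage _)

lemma midpoint_mem_ballFiber {f g : P} (hf : f ∈ ballFiber S v y) (hg : g ∈ ballFiber S v y) :
    (2⁻¹ : ℝ) • f + (2⁻¹ : ℝ) • g ∈ ballFiber S v y :=
  convex_ballFiber hf hg (by norm_num) (by norm_num) (by norm_num)

lemma norm_add_eq_two_of_mem_ballFiber (hv : ‖v‖ = 1) {f g : P} (hf : f ∈ ballFiber S v y)
    (hg : g ∈ ballFiber S v y) : ‖f + g‖ = 2 := by
  refine le_antisymm ((norm_add_le f g).trans (by linarith [hf.1, hg.1])) ?_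
  calc (2 : ℝ) = ‖(S (f + g) : C(W, N)) y‖ := by
        rw [map_add, Submodule.coe_add, ContinuousMap.add_apply, hf.2, hg.2, ← two_smul ℝ,
          norm_smul, hv]; norm_num
    _ ≤ ‖f + g‖ := norm_apply_le_of_norm_le (S.norm_map _).le y

lemma norm_eq_one_of_mem_ballFiber (hv : ‖v‖ = 1) {f : P} (hf : f ∈ ballFiber S v y) :
    ‖f‖ = 1 := by
  linarith [norm_add_eq_two_of_mem_ballFiber hv hf hf, norm_add_le f f, hf.1]

lemma ballFiber_nonempty (hQ : strongBoundaryPoints (Q : Set C(W, N)) = univ) (hv : ‖v‖ = 1)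
    (y : W) : (ballFiber S v y).Nonempty := by
  obtain ⟨g, hg, hgy, -⟩ := exists_peakFunction hQ y univ_mem one_pos hv
  exact ⟨S.symm g, by simp [hg], by simpa using hgy⟩

lemma peakPoints_nonempty (hQ : strongBoundaryPoints (Q : Set C(W, N)) = univ) (hv : ‖v‖ = 1)
    (y : W) : (peakPoints S v y).Nonempty := by
  have : Nonempty (ballFiber S v y) := (ballFiber_nonempty hQ hv y).to_subtype
  set K : ballFiber S v y → Set Z := fun f => {x | ‖((f : P) : C(Z, M)) x‖ = 1}
  have hclosed : ∀ f, IsClosed (K f) := fun f => isClosed_eq (by fun_prop) continuous_const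
  have hne : ∀ f, (K f).Nonempty := fun ⟨f, hf⟩ => by
    have hf1 : ‖(f : C(Z, M))‖ = 1 := norm_eq_one_of_mem_ballFiber hv hf
    obtain ⟨x, hx⟩ := (f : C(Z, M)).exists_norm_apply_eq_norm_s19
      (norm_ne_zero_iff.1 (by simp [hf1]))
    exact ⟨x, hx.trans hf1⟩
  have hdir : Directed (· ⊇ ·) K := fun ⟨f, hf⟩ ⟨g, hg⟩ => by
    refine ⟨⟨_, midpoint_mem_ballFiber hf hg⟩, fun x hx => ?_, fun x hx => ?_⟩ <;>
    · have hsum := norm_add_eq_two_of_norm_midpoint_eq_one (a := (f : C(Z, M)) x)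
        (b := (g : C(Z, M)) x) (by simpa [K] using hx)
      have := norm_add_le ((f : C(Z, M)) x) ((g : C(Z, M)) x)
      have := norm_apply_le_of_norm_le hf.1 x
      have := norm_apply_le_of_norm_le hg.1 x
      show _ = (1 : ℝ)
      linarith
  obtain ⟨x, hx⟩ := IsCompact.nonempty_iInter_of_directed_nonempty_isCompact_isClosed K hdir hne
    (fun f => (hclosed f).isCompact) hclosed
  exact ⟨x, fun f hf => mem_iInter.1 hx ⟨f, hf⟩⟩

lemma mem_ballFiber_of_forall_norm_add_eq_two
    (hQ : strongBoundaryPoints (Q : Set C(W, N)) = univ)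
    (hv : MaxConvexIn (sphere (0 : N) 1) {v}) {f : P} (hf : ‖f‖ ≤ 1)
    (h : ∀ g ∈ ballFiber S v y, ‖f + g‖ = 2) : f ∈ ballFiber S v y := by
  refine ⟨hf, apply_eq_of_forall_norm_add_eq_two hQ hv
    ((S.norm_map f).trans_le hf) fun g hg hgy => ?_⟩
  have hmem : S.symm g ∈ ballFiber S v y := ⟨by simpa using hg, by simpa using hgy⟩
  rw [← h _ hmem, ← S.norm_map, map_add, S.apply_symm_apply]
  rfl

lemma norm_add_apply_eq_two_of_mem_peakPoints {x : Z} (hx : x ∈ peakPoints S v y) {f g : P}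
    (hf : f ∈ ballFiber S v y) (hg : g ∈ ballFiber S v y) :
    ‖(f : C(Z, M)) x + (g : C(Z, M)) x‖ = 2 :=
  norm_add_eq_two_of_norm_midpoint_eq_one (by simpa using hx _ (midpoint_mem_ballFiber hf hg))

variable (hP : strongBoundaryPoints (P : Set C(Z, M)) = univ)
  (hQ : strongBoundaryPoints (Q : Set C(W, N)) = univ) (hv : MaxConvexIn (sphere (0 : N) 1) {v})
include hP hQ hv

lemma exists_peak_mem_ballFiber {x₀ : Z} (hx₀ : x₀ ∈ peakPoints S v y) {U : Set Z}
    (hU : U ∈ 𝓝 x₀) {ε : ℝ} (hε : 0 < ε) :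
    ∃ h ∈ ballFiber S v y, ∀ x ∉ U, ‖(h : C(Z, M)) x‖ < ε := by
  obtain ⟨f₀, hf₀⟩ := ballFiber_nonempty (S := S) hQ hv.norm_eq_one y
  obtain ⟨h, hh, hhx, hhU⟩ := exists_peakFunction hP x₀ hU hε (hx₀ f₀ hf₀)
  refine ⟨h, mem_ballFiber_of_forall_norm_add_eq_two hQ hv hh.le fun g hg => ?_, hhU⟩
  refine le_antisymm ((norm_add_le h g).trans (by linarith [hg.1])) ?_
  calc (2 : ℝ) = ‖((h + g : P) : C(Z, M)) x₀‖ := by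
        simp only [Submodule.coe_add, ContinuousMap.add_apply, hhx]
        exact (norm_add_apply_eq_two_of_mem_peakPoints hx₀ hf₀ hg).symm
    _ ≤ ‖h + g‖ := norm_apply_le_of_norm_le le_rfl x₀

lemma norm_add_apply_le_one_s19 {x₀ : Z} (hx₀ : x₀ ∈ peakPoints S v y) {f : P} (hf : ‖f‖ ≤ 1)
    (hfx₀ : (f : C(Z, M)) x₀ = 0) : ‖v + (S f : C(W, N)) y‖ ≤ 1 := by
  refine le_of_forall_pos_le_add fun δ hδ => ?_
  obtain ⟨h, hh, hhU⟩ := exists_peak_mem_ballFiber hP hQ hv hx₀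
    ((isOpen_lt (by fun_prop) continuous_const).mem_nhds (by simpa [hfx₀] : x₀ ∈
      {x | ‖(f : C(Z, M)) x‖ < δ})) hδ
  -- `h` is small where `f` is not, so `h + f` has norm at most `1 + δ`
  have hsum : ‖h + f‖ ≤ 1 + δ := by
    refine ((h + f : P) : C(Z, M)).norm_le (by linarith) |>.2 fun x => ?_
    simp only [Submodule.coe_add, ContinuousMap.add_apply]
    refine (norm_add_le _ _).trans ?_
    by_cases hx : ‖(f : C(Z, M)) x‖ < δ
    · linarith [norm_apply_le_of_norm_le hh.1 x]
    · linarith [hhU x hx, norm_apply_le_of_norm_le hf x]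
  calc ‖v + (S f : C(W, N)) y‖ = ‖(S (h + f) : C(W, N)) y‖ := by
        rw [map_add, Submodule.coe_add, ContinuousMap.add_apply, hh.2]
    _ ≤ 1 + δ := norm_apply_le_of_norm_le ((S.norm_map _).trans_le hsum) y

lemma apply_eq_zero_of_apply_eq_zero_s19 {x₀ : Z} (hx₀ : x₀ ∈ peakPoints S v y) {f : P}
    (hfx₀ : (f : C(Z, M)) x₀ = 0) : (S f : C(W, N)) y = 0 := by
  set c : ℝ := (‖f‖ + 1)⁻¹
  have hc : 0 < c := by positivity
  have hcf : ‖c • f‖ ≤ 1 := by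
    rw [norm_smul, Real.norm_of_nonneg hc.le, inv_mul_le_one₀ (by positivity)]
    linarith
  have h₁ := norm_add_apply_le_one_s19 hP hQ hv hx₀ hcf (by simp [hfx₀])
  have h₂ := norm_add_apply_le_one_s19 hP hQ hv hx₀ (f := -(c • f)) (by rwa [norm_neg])
    (by simp [hfx₀])
  simp only [map_neg, map_smul, Submodule.coe_neg, Submodule.coe_smul, ContinuousMap.neg_apply,
    ContinuousMap.smul_apply, ← sub_eq_add_neg] at h₁ h₂
  simpa [hc.ne'] using hv.eq_zero_of_norm_add_le_of_norm_sub_le_s19 h₁ h₂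

lemma norm_apply_le_norm_apply {x₀ : Z} (hx₀ : x₀ ∈ peakPoints S v y) (f : P) :
    ‖(S f : C(W, N)) y‖ ≤ ‖(f : C(Z, M)) x₀‖ := by
  obtain ⟨g, hgx₀, hg⟩ := exists_apply_eq_norm_eq hP x₀ ((f : C(Z, M)) x₀)
  have hfg : (S f : C(W, N)) y = (S g : C(W, N)) y := by
    have := apply_eq_zero_of_apply_eq_zero_s19 hP hQ hv hx₀ (f := f - g) (by simp [hgx₀])
    simpa [sub_eq_zero] using this
  rw [hfg, ← hg]
  exact norm_apply_le_of_norm_le (S.norm_map g).le y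

lemma eq_of_mem_peakPoints_symm [T1Space W] {u : M} (hu : MaxConvexIn (sphere (0 : M) 1) {u})
    {x₀ : Z} (hx₀ : x₀ ∈ peakPoints S v y) {y₀ : W} (hy₀ : y₀ ∈ peakPoints S.symm u x₀) :
    y₀ = y := by
  by_contra hne
  obtain ⟨g, hg, hgy, hgy₀⟩ := exists_peakFunction hQ y
    (compl_singleton_mem_nhds (Ne.symm hne)) one_pos hv.norm_eq_one
  have hmem : S.symm g ∈ ballFiber S v y :=
    ⟨(S.symm.norm_map g).trans_le hg.le, by simpa using hgy⟩
  have hle := norm_apply_le_norm_apply hQ hP hu hy₀ g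
  rw [hx₀ _ hmem] at hle
  exact (hgy₀ y₀ (by simp)).not_ge hle

lemma exists_equiv_mem_peakPoints [T1Space Z] [T1Space W] {u : M}
    (hu : MaxConvexIn (sphere (0 : M) 1) {u}) :
    ∃ Φ : W ≃ Z, ∀ y, Φ y ∈ peakPoints S v y ∧ y ∈ peakPoints S.symm u (Φ y) := by
  choose Φ hΦ using peakPoints_nonempty (S := S) hQ hv.norm_eq_one
  choose Ψ hΨ using peakPoints_nonempty (S := S.symm) hP hu.norm_eq_one
  have hΨΦ : ∀ y, Ψ (Φ y) = y := fun y => eq_of_mem_peakPoints_symm hP hQ hv hu (hΦ y) (hΨ _)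
  have hΦΨ : ∀ x, Φ (Ψ x) = x := fun x =>
    eq_of_mem_peakPoints_symm (S := S.symm) hQ hP hu hv (hΨ x) (by simpa using hΦ (Ψ x))
  refine ⟨⟨Φ, Ψ, hΨΦ, hΦΨ⟩, fun y => ⟨hΦ y, ?_⟩⟩
  simpa [hΨΦ y] using hΨ (Φ y)

lemma exists_linearIsometry_apply_eq {u : M} (hu : MaxConvexIn (sphere (0 : M) 1) {u})
    {x₀ : Z} (hx₀ : x₀ ∈ peakPoints S v y) (hy : y ∈ peakPoints S.symm u x₀) :
    ∃ V : M →ₗᵢ[ℝ] N, Function.Surjective V ∧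
      ∀ f : P, (S f : C(W, N)) y = V ((f : C(Z, M)) x₀) := by
  have hnorm : ∀ f : P, ‖(S f : C(W, N)) y‖ = ‖(f : C(Z, M)) x₀‖ := fun f => by
    refine le_antisymm (norm_apply_le_norm_apply hP hQ hv hx₀ f) ?_
    simpa using norm_apply_le_norm_apply hQ hP hu hy (S f)
  obtain ⟨V, hV⟩ := LinearMap.exists_linearIsometry_comp_eq
    ((ContinuousMap.evalCLM ℝ x₀).toLinearMap ∘ₗ P.subtype)
    (fun w => (exists_apply_eq_norm_eq hP x₀ w).imp fun _ h => h.1)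
    ((ContinuousMap.evalCLM ℝ y).toLinearMap ∘ₗ Q.subtype ∘ₗ S.toLinearMap) (by simpa using hnorm)
  simp only [LinearMap.coe_comp, Function.comp_apply] at hV
  refine ⟨V, fun z => ?_, fun f => (hV f).symm⟩
  obtain ⟨g, hgy, -⟩ := exists_apply_eq_norm_eq hQ y z
  exact ⟨(S.symm g : C(Z, M)) x₀, by simpa [hgy] using hV (S.symm g)⟩

lemma continuous_of_mem_peakPoints {Φ : W → Z} (hΦ : ∀ y, Φ y ∈ peakPoints S v y)
    (hnorm : ∀ (f : P) y, ‖(S f : C(W, N)) y‖ = ‖(f : C(Z, M)) (Φ y)‖) : Continuous Φ := by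
  refine continuous_iff_continuousAt.2 fun y O hO => ?_
  -- `‖S h y'‖ = ‖h (Φ y')‖` is small unless `Φ y' ∈ O`, and `S h y = v`
  obtain ⟨h, hh, hhO⟩ := exists_peak_mem_ballFiber hP hQ hv (hΦ y) hO (by norm_num : (0 : ℝ) < 2⁻¹)
  have hy : y ∈ {y' | 2⁻¹ < ‖(S h : C(W, N)) y'‖} := by
    simpa [hh.2, hv.norm_eq_one] using (by norm_num : (2⁻¹ : ℝ) < 1)
  refine mem_map.2 <| mem_of_superset ((isOpen_lt continuous_const
    (continuous_norm.comp (S h : C(W, N)).continuous)).mem_nhds hy) fun y' hy' => ?_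
  by_contra hO'
  exact (hhO _ hO').not_gt (hnorm h y' ▸ hy')

variable (S) in
theorem exists_homeomorph_linearIsometry_apply_eq [T2Space Z] [T1Space W] {u : M}
    (hu : MaxConvexIn (sphere (0 : M) 1) {u}) :
    ∃ (Φ : W ≃ₜ Z) (V : W → M →ₗᵢ[ℝ] N), (∀ y, Function.Surjective (V y)) ∧
      ∀ (f : P) y, (S f : C(W, N)) y = V y ((f : C(Z, M)) (Φ y)) := by
  obtain ⟨Φ, hΦ⟩ := exists_equiv_mem_peakPoints hP hQ hv hu
  choose V hVsurj hV using fun y => exists_linearIsometry_apply_eq hP hQ hv hu (hΦ y).1 (hΦ y).2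
  have hcont : Continuous Φ := continuous_of_mem_peakPoints hP hQ hv (fun y => (hΦ y).1)
    fun f y => by rw [hV, (V y).norm_map]
  exact ⟨hcont.homeoOfEquivCompactToT2, V, hVsurj, fun f y => hV y f⟩

end IsometryOfFunctionSpaces

lemma Submodule.exists_linearIsometryEquiv_eq_sub_map_zero {G H : Type*} [NormedAddCommGroup G]
    [NormedSpace ℝ G] [NormedAddCommGroup H] [NormedSpace ℝ H] (P : Submodule ℝ G)
    (Q : Submodule ℝ H) (T : G → H) (hmap : ∀ f ∈ P, T f ∈ Q) (hsurj : ∀ g ∈ Q, ∃ f ∈ P, T f = g)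
    (hiso : ∀ f ∈ P, ∀ g ∈ P, ‖T f - T g‖ = ‖f - g‖) :
    ∃ S : P ≃ₗᵢ[ℝ] Q, ∀ f : P, (S f : H) = T f - T 0 := by
  set e₀ : P → Q := fun f => ⟨T f, hmap f f.2⟩
  have he₀ : Isometry e₀ := Isometry.of_dist_eq fun f g => by
    simp only [dist_eq_norm, e₀]
    exact hiso _ f.2 _ g.2
  have he₀surj : Function.Surjective e₀ := fun g => by
    obtain ⟨f, hf, hfg⟩ := hsurj g g.2
    exact ⟨⟨f, hf⟩, Subtype.ext hfg⟩
  let e : P ≃ᵢ Q := ⟨Equiv.ofBijective e₀ ⟨he₀.injective, he₀surj⟩, he₀⟩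
  refine ⟨e.toRealLinearIsometryEquiv, fun f => ?_⟩
  simp only [IsometryEquiv.toRealLinearIsometryEquiv_apply, Submodule.coe_sub]
  rfl

theorem stmt19_general (v : F) (hv : MaxConvexIn (sphere (0 : F) 1) {v})
    (u : E) (hu : MaxConvexIn (sphere (0 : E) 1) {u})
    (A : Subspace 𝕂 C(X, E))
    (hΘA : strongBoundaryPoints (A : Set C(X, E)) = Set.univ)
    (B : Subspace 𝕂 C(Y, F))
    (hΘB : strongBoundaryPoints (B : Set C(Y, F)) = Set.univ)
    (T : C(X, E) → C(Y, F))
    (hmap : ∀ f ∈ A, T f ∈ B)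
    (hsurj : ∀ g ∈ B, ∃ f ∈ A, T f = g)
    (hiso : ∀ f ∈ A, ∀ g ∈ A, ‖T f - T g‖ = ‖f - g‖) :
    ∃ (Φ : Y ≃ₜ X) (V : Y → (E →ₗᵢ[ℝ] F)),
      (∀ y : Y, Function.Surjective (V y)) ∧
      (∀ f ∈ A, ∀ y : Y, T f y = T 0 y + V y (f (Φ y))) := by
  obtain ⟨S, hS⟩ := Submodule.exists_linearIsometryEquiv_eq_sub_map_zero
    (A.restrictScalars ℝ) (B.restrictScalars ℝ) T hmap hsurj hiso
  obtain ⟨Φ, V, hVsurj, hV⟩ := exists_homeomorph_linearIsometry_apply_eq S hΘA hΘB hv hu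
  refine ⟨Φ, V, hVsurj, fun f hf y => ?_⟩
  rw [← hV ⟨f, hf⟩ y, hS]
  simp

/-- If in addition the unit sphere of `E` also has a singleton maximal convex
subset, then `Φ` is a homeomorphism and all the `V_y` are surjective real-linear
isometries. -/
theorem stmt19 (v : F) (hv : MaxConvexIn (sphere (0 : F) 1) {v})
    (u : E) (hu : MaxConvexIn (sphere (0 : E) 1) {u})
    (A : Subspace 𝕂 C(X, E)) (hAcl : IsClosed (A : Set C(X, E)))
    (hΘA : strongBoundaryPoints (A : Set C(X, E)) = Set.univ)
    (B : Subspace 𝕂 C(Y, F))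
    (hΘB : strongBoundaryPoints (B : Set C(Y, F)) = Set.univ)
    (T : C(X, E) → C(Y, F))
    (hmap : ∀ f ∈ A, T f ∈ B)
    (hsurj : ∀ g ∈ B, ∃ f ∈ A, T f = g)
    (hiso : ∀ f ∈ A, ∀ g ∈ A, ‖T f - T g‖ = ‖f - g‖) :
    ∃ (Φ : Y ≃ₜ X) (V : Y → (E →ₗᵢ[ℝ] F)),
      (∀ y : Y, Function.Surjective (V y)) ∧
      (∀ f ∈ A, ∀ y : Y, T f y = T 0 y + V y (f (Φ y))) :=
  stmt19_general v hv u hu A hΘA B hΘB T hmap hsurj hiso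
end
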